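/- arXiv:2503.04320 — 4 statements merged into one kernel-verified Lean document; each statement's English description precedes it below -/
import Mathlib

section
/- Let H be a 2-connected graph that is neither a clique nor a cycle, and suppose H contains a triangle (i.e., a clique of size at least 3 as a subgraph). Then H contains an induced subgraph H' that is 2-connected, not a clique, not a cycle, with exactly two vertices of degree 3 in H' and all other vertices of degree 2 in H'. -/
namespace Stmt1

variable {V : Type*} [Fintype V]

/-- The degree of `v` inside the subgraph of `H` induced by `s`. -/
noncomputable def degIn (H : SimpleGraph V) (s : Set V) (v : V) : ℕ :=
  {w | w ∈ s ∧ H.Adj v w}.ncard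

/-- The subgraph of `H` induced by `s` is 2-connected: it has at least 3 vertices,
is connected, and stays connected after deleting any single vertex. -/
def TwoConnOn (H : SimpleGraph V) (s : Set V) : Prop :=
  3 ≤ s.ncard ∧ (H.induce s).Connected ∧ ∀ v ∈ s, (H.induce (s \ {v})).Connected

/-- The subgraph of `H` induced by `s` is a cycle: connected and 2-regular
(with at least 3 vertices). -/
def IsCycleOn (H : SimpleGraph V) (s : Set V) : Prop :=
  3 ≤ s.ncard ∧ (H.induce s).Connected ∧ ∀ v ∈ s, degIn H s v = 2

def homIn (H : SimpleGraph V) (s : Set V) : H.induce s →g H :=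
  ⟨Subtype.val, fun {_ _} h => h⟩
lemma exists_cross {H : SimpleGraph V} {K : Finset V} :
    ∀ {x y : V} (_ : H.Walk x y), x ∈ K → y ∉ K → ∃ u v, u ∈ K ∧ v ∉ K ∧ H.Adj u v := by
  intro x y p
  induction p with
  | nil => intro h h'; exact absurd h h'
  | @cons a b c h p ih =>
    intro hx hy
    by_cases hb : b ∈ K
    · exact ih hb hy
    · exact ⟨a, b, hx, hb, h⟩


lemma degIn_eq_pair {H : SimpleGraph V} {s : Set V} {v x y : V} (hxy : x ≠ y)
    (h : ∀ w, (w ∈ s ∧ H.Adj v w) ↔ (w = x ∨ w = y)) : degIn H s v = 2 := by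
  have hs : {w | w ∈ s ∧ H.Adj v w} = {x, y} := by ext w; simpa using h w
  rw [degIn, hs, Set.ncard_pair hxy]

lemma degIn_eq_triple {H : SimpleGraph V} {s : Set V} {v x y z : V}
    (hxy : x ≠ y) (hxz : x ≠ z) (hyz : y ≠ z)
    (h : ∀ w, (w ∈ s ∧ H.Adj v w) ↔ (w = x ∨ w = y ∨ w = z)) : degIn H s v = 3 := by
  have hs : {w | w ∈ s ∧ H.Adj v w} = {x, y, z} := by ext w; simpa using h w
  rw [degIn, hs]
  rw [Set.ncard_insert_of_notMem (by simp [hxy, hxz]) (Set.toFinite _), Set.ncard_pair hyz]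

lemma connected_of_fun (H : SimpleGraph V) (s : Set V) (f : ℕ → V) (N : ℕ) (hN : 0 < N)
    (hmem : ∀ m, m < N → f m ∈ s)
    (hadj : ∀ m, m + 1 < N → H.Adj (f m) (f (m + 1)))
    (hspan : ∀ x ∈ s, ∃ i, i < N ∧ f i = x) : (H.induce s).Connected := by
  have key : ∀ i (hi : i < N),
      (H.induce s).Reachable ⟨f 0, hmem 0 hN⟩ ⟨f i, hmem i hi⟩ := by
    intro i
    induction i with
    | zero => intro hi; exact SimpleGraph.Reachable.refl _
    | succ n ih =>
      intro hi
      have hn : n < N := Nat.lt_of_succ_lt hi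
      refine (ih hn).trans ?_
      exact SimpleGraph.Adj.reachable (by exact hadj n hi)
  rw [SimpleGraph.connected_iff]
  refine ⟨?_, ⟨⟨f 0, hmem 0 hN⟩⟩⟩
  intro x y
  obtain ⟨i, hi, hfi⟩ := hspan x.1 x.2
  obtain ⟨j, hj, hfj⟩ := hspan y.1 y.2
  have hx : x = ⟨f i, hmem i hi⟩ := by ext; exact hfi.symm
  have hy : y = ⟨f j, hmem j hj⟩ := by ext; exact hfj.symm
  rw [hx, hy]
  exact (key i hi).symm.trans (key j hj)

lemma caseI (H : SimpleGraph V) (v u₁ u₂ w : V)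
    (hvu₁ : v ≠ u₁) (hvu₂ : v ≠ u₂) (hvw : v ≠ w)
    (hu₁u₂ : u₁ ≠ u₂) (hu₁w : u₁ ≠ w) (hu₂w : u₂ ≠ w)
    (Avu₁ : H.Adj v u₁) (Avu₂ : H.Adj v u₂) (nAvw : ¬ H.Adj v w)
    (Au₁u₂ : H.Adj u₁ u₂) (Au₁w : H.Adj u₁ w) (Au₂w : H.Adj u₂ w) :
    ∃ s : Set V,
      TwoConnOn H s ∧ ¬ H.IsClique s ∧ ¬ IsCycleOn H s ∧
      {x ∈ s | degIn H s x = 3}.ncard = 2 ∧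
      ∀ x ∈ s, degIn H s x = 3 ∨ degIn H s x = 2 := by
  classical
  set s : Set V := {v, u₁, u₂, w} with hs
  have hmem : ∀ x, x ∈ s ↔ x = v ∨ x = u₁ ∨ x = u₂ ∨ x = w := by
    intro x; simp [hs]
  have hmv : v ∈ s := (hmem v).2 (by tauto)
  have hmu₁ : u₁ ∈ s := (hmem u₁).2 (by tauto)
  have hmu₂ : u₂ ∈ s := (hmem u₂).2 (by tauto)
  have hmw : w ∈ s := (hmem w).2 (by tauto)
  have hdv : degIn H s v = 2 := by
    refine degIn_eq_pair hu₁u₂ ?_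
    intro x
    constructor
    · rintro ⟨hx, hadj⟩
      rcases (hmem x).1 hx with h | h | h | h
      · rw [h] at hadj; exact absurd hadj (H.loopless.irrefl v)
      · exact Or.inl h
      · exact Or.inr h
      · rw [h] at hadj; exact absurd hadj nAvw
    · rintro (h | h) <;> rw [h]
      · exact ⟨hmu₁, Avu₁⟩
      · exact ⟨hmu₂, Avu₂⟩
  have hdw : degIn H s w = 2 := by
    refine degIn_eq_pair hu₁u₂ ?_
    intro x
    constructor
    · rintro ⟨hx, hadj⟩
      rcases (hmem x).1 hx with h | h | h | h
      · rw [h] at hadj; exact absurd hadj.symm nAvw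
      · exact Or.inl h
      · exact Or.inr h
      · rw [h] at hadj; exact absurd hadj (H.loopless.irrefl w)
    · rintro (h | h) <;> rw [h]
      · exact ⟨hmu₁, Au₁w.symm⟩
      · exact ⟨hmu₂, Au₂w.symm⟩
  have hdu₁ : degIn H s u₁ = 3 := by
    refine degIn_eq_triple hvu₂ hvw hu₂w ?_
    intro x
    constructor
    · rintro ⟨hx, hadj⟩
      rcases (hmem x).1 hx with h | h | h | h
      · exact Or.inl h
      · rw [h] at hadj; exact absurd hadj (H.loopless.irrefl u₁)
      · exact Or.inr (Or.inl h)
      · exact Or.inr (Or.inr h)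
    · rintro (h | h | h) <;> rw [h]
      · exact ⟨hmv, Avu₁.symm⟩
      · exact ⟨hmu₂, Au₁u₂⟩
      · exact ⟨hmw, Au₁w⟩
  have hdu₂ : degIn H s u₂ = 3 := by
    refine degIn_eq_triple hvu₁ hvw hu₁w ?_
    intro x
    constructor
    · rintro ⟨hx, hadj⟩
      rcases (hmem x).1 hx with h | h | h | h
      · exact Or.inl h
      · exact Or.inr (Or.inl h)
      · rw [h] at hadj; exact absurd hadj (H.loopless.irrefl u₂)
      · exact Or.inr (Or.inr h)
    · rintro (h | h | h) <;> rw [h]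
      · exact ⟨hmv, Avu₂.symm⟩
      · exact ⟨hmu₁, Au₁u₂.symm⟩
      · exact ⟨hmw, Au₂w⟩
  refine ⟨s, ⟨?_, ?_, ?_⟩, ?_, ?_, ?_, ?_⟩
  · have hsub : ({u₁, u₂, w} : Set V) ⊆ s := by
      intro x hx; rw [hmem]; revert hx; simp; tauto
    calc (3:ℕ) = ({u₁, u₂, w} : Set V).ncard := by
          rw [Set.ncard_insert_of_notMem (by simp [hu₁u₂, hu₁w]) (Set.toFinite _),
            Set.ncard_pair hu₂w]
        _ ≤ s.ncard := Set.ncard_le_ncard hsub (Set.toFinite _)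
  · refine connected_of_fun H s (fun n => if n = 0 then v else if n = 1 then u₁
      else if n = 2 then w else u₂) 4 (by norm_num) ?_ ?_ ?_
    · intro m _; rw [hmem]; split_ifs <;> tauto
    · intro m hm
      have hm' : m = 0 ∨ m = 1 ∨ m = 2 := by omega
      rcases hm' with h | h | h <;> subst h
      · simpa using Avu₁
      · simpa using Au₁w
      · simpa using Au₂w.symm
    · intro x hx
      rcases (hmem x).1 hx with h | h | h | h <;> rw [h]
      · exact ⟨0, by norm_num⟩
      · exact ⟨1, by norm_num⟩
      · exact ⟨3, by norm_num⟩
      · exact ⟨2, by norm_num⟩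
  · intro x hx
    have build : ∀ (p q r : V), p ∈ s → q ∈ s → r ∈ s → p ≠ x → q ≠ x → r ≠ x →
        H.Adj p q → H.Adj q r → (∀ y ∈ s, y = x ∨ y = p ∨ y = q ∨ y = r) →
        (H.induce (s \ {x})).Connected := by
      intro p q r hp hq hr hpx hqx hrx hpq hqr hcov
      refine connected_of_fun H (s \ {x}) (fun n => if n = 0 then p else if n = 1 then q else r)
        3 (by norm_num) ?_ ?_ ?_
      · intro m _; split_ifs
        · exact ⟨hp, by simpa using hpx⟩
        · exact ⟨hq, by simpa using hqx⟩
        · exact ⟨hr, by simpa using hrx⟩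
      · intro m hm
        have hm' : m = 0 ∨ m = 1 := by omega
        rcases hm' with h | h <;> subst h
        · simpa using hpq
        · simpa using hqr
      · intro y hy
        rcases hcov y hy.1 with h | h | h | h
        · exact absurd h (by simpa using hy.2)
        · exact ⟨0, by norm_num, h.symm⟩
        · exact ⟨1, by norm_num, h.symm⟩
        · exact ⟨2, by norm_num, h.symm⟩
    rcases (hmem x).1 hx with h | h | h | h
    · subst h
      exact build u₁ u₂ w hmu₁ hmu₂ hmw hvu₁.symm hvu₂.symm hvw.symm Au₁u₂ Au₂w
        (fun y hy => by rcases (hmem y).1 hy with h|h|h|h <;> tauto)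
    · subst h
      exact build v u₂ w hmv hmu₂ hmw hvu₁ hu₁u₂.symm hu₁w.symm Avu₂ Au₂w
        (fun y hy => by rcases (hmem y).1 hy with h|h|h|h <;> tauto)
    · subst h
      exact build v u₁ w hmv hmu₁ hmw hvu₂ hu₁u₂ hu₂w.symm Avu₁ Au₁w
        (fun y hy => by rcases (hmem y).1 hy with h|h|h|h <;> tauto)
    · subst h
      exact build v u₁ u₂ hmv hmu₁ hmu₂ hvw hu₁w hu₂w Avu₁ Au₁u₂
        (fun y hy => by rcases (hmem y).1 hy with h|h|h|h <;> tauto)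
  · intro hcl
    exact nAvw (hcl hmv hmw hvw)
  · intro hcyc
    have h2 := hcyc.2.2 u₁ hmu₁
    rw [hdu₁] at h2
    exact absurd h2 (by norm_num)
  · have hset : {x ∈ s | degIn H s x = 3} = {u₁, u₂} := by
      ext x
      simp only [Set.mem_setOf_eq, Set.mem_insert_iff, Set.mem_singleton_iff]
      constructor
      · rintro ⟨hx, h3⟩
        rcases (hmem x).1 hx with h | h | h | h
        · rw [h, hdv] at h3; exact absurd h3 (by norm_num)
        · exact Or.inl h
        · exact Or.inr h
        · rw [h, hdw] at h3; exact absurd h3 (by norm_num)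
      · rintro (h | h) <;> rw [h]
        · exact ⟨hmu₁, hdu₁⟩
        · exact ⟨hmu₂, hdu₂⟩
    rw [hset, Set.ncard_pair hu₁u₂]
  · intro x hx
    rcases (hmem x).1 hx with h | h | h | h <;> rw [h]
    · exact Or.inr hdv
    · exact Or.inl hdu₁
    · exact Or.inl hdu₂
    · exact Or.inr hdw

lemma caseII (H : SimpleGraph V) (q : ℕ → V) (t : ℕ) (u w z : V)
    (ht : 1 ≤ t)
    (huw : u ≠ w) (huz : u ≠ z) (hwz : w ≠ z)
    (Auw : H.Adj u w) (Auz : H.Adj u z) (Awz : H.Adj w z)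
    (Auq0 : H.Adj u (q 0)) (Awqt : H.Adj w (q t))
    (hch : ∀ i, i < t → H.Adj (q i) (q (i+1)))
    (hinj : ∀ i j, i < j → j ≤ t → q i ≠ q j)
    (hnochord : ∀ i j, i + 1 < j → j ≤ t → ¬ H.Adj (q i) (q j))
    (hu_q : ∀ i, 1 ≤ i → i ≤ t → ¬ H.Adj u (q i))
    (hw_q : ∀ i, i < t → ¬ H.Adj w (q i))
    (hz_q : ∀ i, i ≤ t → ¬ H.Adj z (q i))
    (hq_ne_u : ∀ i, i ≤ t → q i ≠ u)
    (hq_ne_w : ∀ i, i ≤ t → q i ≠ w)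
    (hq_ne_z : ∀ i, i ≤ t → q i ≠ z) :
    ∃ s : Set V,
      TwoConnOn H s ∧ ¬ H.IsClique s ∧ ¬ IsCycleOn H s ∧
      {x ∈ s | degIn H s x = 3}.ncard = 2 ∧
      ∀ x ∈ s, degIn H s x = 3 ∨ degIn H s x = 2 := by
  classical
  set s : Set V := insert u (insert w (insert z {x | ∃ i, i ≤ t ∧ q i = x})) with hs
  have hmem : ∀ x, x ∈ s ↔ x = u ∨ x = w ∨ x = z ∨ ∃ i, i ≤ t ∧ q i = x := by
    intro x
    simp [hs, Set.mem_insert_iff, Set.mem_setOf_eq, eq_comm]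
  have hmu : u ∈ s := (hmem u).2 (by tauto)
  have hmw : w ∈ s := (hmem w).2 (by tauto)
  have hmz : z ∈ s := (hmem z).2 (by tauto)
  have hmq : ∀ i, i ≤ t → q i ∈ s := fun i hi => (hmem (q i)).2 (by tauto)
  have adjqq : ∀ i j, i ≤ t → j ≤ t → H.Adj (q i) (q j) → j = i + 1 ∨ i = j + 1 := by
    intro i j hi hj h
    rcases lt_trichotomy i j with hij | hij | hij
    · rcases Nat.eq_or_lt_of_le (Nat.succ_le_of_lt hij) with he | hl
      · exact Or.inl he.symm
      · exact absurd h (hnochord i j hl hj)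
    · rw [hij] at h; exact absurd h (H.loopless.irrefl _)
    · rcases Nat.eq_or_lt_of_le (Nat.succ_le_of_lt hij) with he | hl
      · exact Or.inr he.symm
      · exact absurd h.symm (hnochord j i hl hi)
  -- degrees
  have hdu : degIn H s u = 3 := by
    refine degIn_eq_triple hwz (hq_ne_w 0 (by omega)).symm (hq_ne_z 0 (by omega)).symm ?_
    intro x
    constructor
    · rintro ⟨hx, hadj⟩
      rcases (hmem x).1 hx with h | h | h | ⟨i, hi, h⟩
      · rw [h] at hadj; exact absurd hadj (H.loopless.irrefl u)
      · exact Or.inl h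
      · exact Or.inr (Or.inl h)
      · rcases Nat.eq_zero_or_pos i with h0 | h0
        · rw [h0] at h; exact Or.inr (Or.inr h.symm)
        · rw [← h] at hadj; exact absurd hadj (hu_q i h0 hi)
    · rintro (h | h | h) <;> rw [h]
      · exact ⟨hmw, Auw⟩
      · exact ⟨hmz, Auz⟩
      · exact ⟨hmq 0 (by omega), Auq0⟩
  have hdw : degIn H s w = 3 := by
    refine degIn_eq_triple huz (hq_ne_u t le_rfl).symm (hq_ne_z t le_rfl).symm ?_
    intro x
    constructor
    · rintro ⟨hx, hadj⟩
      rcases (hmem x).1 hx with h | h | h | ⟨i, hi, h⟩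
      · exact Or.inl h
      · rw [h] at hadj; exact absurd hadj (H.loopless.irrefl w)
      · exact Or.inr (Or.inl h)
      · rcases Nat.eq_or_lt_of_le hi with h0 | h0
        · rw [h0] at h; exact Or.inr (Or.inr h.symm)
        · rw [← h] at hadj; exact absurd hadj (hw_q i h0)
    · rintro (h | h | h) <;> rw [h]
      · exact ⟨hmu, Auw.symm⟩
      · exact ⟨hmz, Awz⟩
      · exact ⟨hmq t le_rfl, Awqt⟩
  have hdz : degIn H s z = 2 := by
    refine degIn_eq_pair huw ?_
    intro x
    constructor
    · rintro ⟨hx, hadj⟩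
      rcases (hmem x).1 hx with h | h | h | ⟨i, hi, h⟩
      · exact Or.inl h
      · exact Or.inr h
      · rw [h] at hadj; exact absurd hadj (H.loopless.irrefl z)
      · rw [← h] at hadj; exact absurd hadj (hz_q i hi)
    · rintro (h | h) <;> rw [h]
      · exact ⟨hmu, Auz.symm⟩
      · exact ⟨hmw, Awz.symm⟩
  have hdq : ∀ i, i ≤ t → degIn H s (q i) = 2 := by
    intro i hi
    rcases Nat.eq_zero_or_pos i with h0 | h0
    · -- i = 0
      subst h0
      refine degIn_eq_pair (hq_ne_u 1 ht).symm ?_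
      intro x
      constructor
      · rintro ⟨hx, hadj⟩
        rcases (hmem x).1 hx with h | h | h | ⟨j, hj, h⟩
        · exact Or.inl h
        · rw [h] at hadj; exact absurd hadj.symm (hw_q 0 (by omega))
        · rw [h] at hadj; exact absurd hadj.symm (hz_q 0 (by omega))
        · rw [← h] at hadj
          rcases adjqq 0 j (by omega) hj hadj with h1 | h1
          · rw [h1] at h; exact Or.inr h.symm
          · omega
      · rintro (h | h) <;> rw [h]
        · exact ⟨hmu, Auq0.symm⟩
        · exact ⟨hmq 1 ht, hch 0 (by omega)⟩
    · rcases Nat.eq_or_lt_of_le hi with hit | hit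
      · -- i = t
        subst hit
        refine degIn_eq_pair (hq_ne_w (i-1) (by omega)) ?_
        intro x
        constructor
        · rintro ⟨hx, hadj⟩
          rcases (hmem x).1 hx with h | h | h | ⟨j, hj, h⟩
          · rw [h] at hadj; exact absurd hadj.symm (hu_q i h0 le_rfl)
          · exact Or.inr h
          · rw [h] at hadj; exact absurd hadj.symm (hz_q i le_rfl)
          · rw [← h] at hadj
            rcases adjqq i j le_rfl hj hadj with h1 | h1
            · omega
            · have : j = i - 1 := by omega
              rw [this] at h; exact Or.inl h.symm
        · rintro (h | h) <;> rw [h]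
          · refine ⟨hmq (i-1) (by omega), ?_⟩
            have hc := hch (i-1) (by omega)
            have e : i - 1 + 1 = i := by omega
            rw [e] at hc
            exact hc.symm
          · exact ⟨hmw, Awqt.symm⟩
      · -- 0 < i < t
        refine degIn_eq_pair (hinj (i-1) (i+1) (by omega) (by omega)) ?_
        intro x
        constructor
        · rintro ⟨hx, hadj⟩
          rcases (hmem x).1 hx with h | h | h | ⟨j, hj, h⟩
          · rw [h] at hadj; exact absurd hadj.symm (hu_q i h0 hi)
          · rw [h] at hadj; exact absurd hadj.symm (hw_q i hit)
          · rw [h] at hadj; exact absurd hadj.symm (hz_q i hi)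
          · rw [← h] at hadj
            rcases adjqq i j hi hj hadj with h1 | h1
            · rw [h1] at h; exact Or.inr h.symm
            · have : j = i - 1 := by omega
              rw [this] at h; exact Or.inl h.symm
        · rintro (h | h) <;> rw [h]
          · refine ⟨hmq (i-1) (by omega), ?_⟩
            have hc := hch (i-1) (by omega)
            have e : i - 1 + 1 = i := by omega
            rw [e] at hc
            exact hc.symm
          · exact ⟨hmq (i+1) (by omega), hch i hit⟩
  -- assembly
  refine ⟨s, ⟨?_, ?_, ?_⟩, ?_, ?_, ?_, ?_⟩
  · -- ncard ≥ 3
    have hsub : ({u, w, z} : Set V) ⊆ s := by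
      intro x hx
      rcases hx with h | h | h
      · rw [h]; exact hmu
      · rw [h]; exact hmw
      · rw [Set.mem_singleton_iff] at h; rw [h]; exact hmz
    calc (3:ℕ) = ({u, w, z} : Set V).ncard := by
          rw [Set.ncard_insert_of_notMem (by simp [huw, huz]) (Set.toFinite _),
            Set.ncard_pair hwz]
        _ ≤ s.ncard := Set.ncard_le_ncard hsub (Set.toFinite _)
  · -- connected
    set f : ℕ → V := fun n => if n = 0 then z else if n = 1 then u
      else if n ≤ t + 2 then q (n - 2) else w with hf
    have f0 : f 0 = z := by simp [hf]
    have f1 : f 1 = u := by simp [hf]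
    have fq : ∀ n, 2 ≤ n → n ≤ t + 2 → f n = q (n - 2) := by
      intro n h1 h2
      simp only [hf]
      rw [if_neg (show ¬ n = 0 by omega), if_neg (show ¬ n = 1 by omega),
        if_pos (show n ≤ t + 2 by omega)]
    have fw : f (t + 3) = w := by
      simp only [hf]
      rw [if_neg (show ¬ t + 3 = 0 by omega), if_neg (show ¬ t + 3 = 1 by omega),
        if_neg (show ¬ t + 3 ≤ t + 2 by omega)]
    refine connected_of_fun H s f (t + 4) (by omega) ?_ ?_ ?_
    · intro m hm
      rcases (show m = 0 ∨ m = 1 ∨ (2 ≤ m ∧ m ≤ t + 2) ∨ m = t + 3 by omega)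
        with h | h | ⟨h1, h2⟩ | h
      · rw [h, f0]; exact hmz
      · rw [h, f1]; exact hmu
      · rw [fq m h1 h2]; exact hmq _ (by omega)
      · rw [h, fw]; exact hmw
    · intro m hm
      rcases (show m = 0 ∨ m = 1 ∨ (2 ≤ m ∧ m + 1 ≤ t + 2) ∨ m = t + 2 by omega)
        with h | h | ⟨h1, h2⟩ | h
      · rw [h]; rw [show (0:ℕ) + 1 = 1 from rfl, f0, f1]; exact Auz.symm
      · rw [h]; rw [show (1:ℕ) + 1 = 2 from rfl, f1, fq 2 (by omega) (by omega)]
        rw [show (2:ℕ) - 2 = 0 from rfl]; exact Auq0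
      · rw [fq m h1 (by omega), fq (m+1) (by omega) h2]
        rw [show m + 1 - 2 = (m - 2) + 1 by omega]
        exact hch (m - 2) (by omega)
      · rw [h, show t + 2 + 1 = t + 3 from rfl, fq (t+2) (by omega) le_rfl, fw,
          show t + 2 - 2 = t by omega]
        exact Awqt.symm
    · intro x hx
      rcases (hmem x).1 hx with h | h | h | ⟨i, hi, h⟩
      · exact ⟨1, by omega, by rw [f1, h]⟩
      · exact ⟨t + 3, by omega, by rw [fw, h]⟩
      · exact ⟨0, by omega, by rw [f0, h]⟩
      · refine ⟨i + 2, by omega, ?_⟩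
        rw [fq (i+2) (by omega) (by omega), show i + 2 - 2 = i by omega, h]
  · -- deletions
    intro x hx
    rcases (hmem x).1 hx with h | h | h | ⟨i, hi, h⟩
    · -- delete u
      rw [h]
      set f : ℕ → V := fun n => if n = 0 then z else if n = 1 then w
        else q (t + 2 - n) with hf
      have f0 : f 0 = z := by simp [hf]
      have f1 : f 1 = w := by simp [hf]
      have fq : ∀ n, 2 ≤ n → f n = q (t + 2 - n) := by
        intro n h1
        simp only [hf]
        rw [if_neg (show ¬ n = 0 by omega), if_neg (show ¬ n = 1 by omega)]
      refine connected_of_fun H _ f (t + 3) (by omega) ?_ ?_ ?_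
      · intro m hm
        rcases (show m = 0 ∨ m = 1 ∨ (2 ≤ m ∧ m ≤ t + 2) by omega) with h | h | ⟨h1, h2⟩
        · rw [h, f0]; exact ⟨hmz, by simp [huz.symm]⟩
        · rw [h, f1]; exact ⟨hmw, by simp [huw.symm]⟩
        · rw [fq m h1]
          exact ⟨hmq _ (by omega), by simp [hq_ne_u _ (show t + 2 - m ≤ t by omega)]⟩
      · intro m hm
        rcases (show m = 0 ∨ m = 1 ∨ (2 ≤ m ∧ m + 1 ≤ t + 2) by omega) with h | h | ⟨h1, h2⟩
        · rw [h, show (0:ℕ) + 1 = 1 from rfl, f0, f1]; exact Awz.symm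
        · rw [h, show (1:ℕ) + 1 = 2 from rfl, f1, fq 2 (by omega),
            show t + 2 - 2 = t by omega]
          exact Awqt
        · rw [fq m h1, fq (m+1) (by omega)]
          rw [show t + 2 - m = (t + 2 - (m + 1)) + 1 by omega]
          exact (hch (t + 2 - (m + 1)) (by omega)).symm
      · intro y hy
        rcases (hmem y).1 hy.1 with h | h | h | ⟨j, hj, h⟩
        · exact absurd h (by simpa using hy.2)
        · exact ⟨1, by omega, by rw [f1, h]⟩
        · exact ⟨0, by omega, by rw [f0, h]⟩
        · refine ⟨t + 2 - j, by omega, ?_⟩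
          rw [fq (t + 2 - j) (by omega), show t + 2 - (t + 2 - j) = j by omega, h]
    · -- delete w
      rw [h]
      set f : ℕ → V := fun n => if n = 0 then z else if n = 1 then u
        else q (n - 2) with hf
      have f0 : f 0 = z := by simp [hf]
      have f1 : f 1 = u := by simp [hf]
      have fq : ∀ n, 2 ≤ n → f n = q (n - 2) := by
        intro n h1
        simp only [hf]
        rw [if_neg (show ¬ n = 0 by omega), if_neg (show ¬ n = 1 by omega)]
      refine connected_of_fun H _ f (t + 3) (by omega) ?_ ?_ ?_
      · intro m hm
        rcases (show m = 0 ∨ m = 1 ∨ (2 ≤ m ∧ m ≤ t + 2) by omega) with h | h | ⟨h1, h2⟩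
        · rw [h, f0]; exact ⟨hmz, by simp [hwz.symm]⟩
        · rw [h, f1]; exact ⟨hmu, by simp [huw]⟩
        · rw [fq m h1]
          exact ⟨hmq _ (by omega), by simp [hq_ne_w _ (show m - 2 ≤ t by omega)]⟩
      · intro m hm
        rcases (show m = 0 ∨ m = 1 ∨ (2 ≤ m ∧ m + 1 ≤ t + 2) by omega) with h | h | ⟨h1, h2⟩
        · rw [h, show (0:ℕ) + 1 = 1 from rfl, f0, f1]; exact Auz.symm
        · rw [h, show (1:ℕ) + 1 = 2 from rfl, f1, fq 2 (by omega),
            show (2:ℕ) - 2 = 0 from rfl]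
          exact Auq0
        · rw [fq m h1, fq (m+1) (by omega), show m + 1 - 2 = (m - 2) + 1 by omega]
          exact hch (m - 2) (by omega)
      · intro y hy
        rcases (hmem y).1 hy.1 with h | h | h | ⟨j, hj, h⟩
        · exact ⟨1, by omega, by rw [f1, h]⟩
        · exact absurd h (by simpa using hy.2)
        · exact ⟨0, by omega, by rw [f0, h]⟩
        · refine ⟨j + 2, by omega, ?_⟩
          rw [fq (j + 2) (by omega), show j + 2 - 2 = j by omega, h]
    · -- delete z
      rw [h]
      set f : ℕ → V := fun n => if n ≤ t then q n else if n = t + 1 then w else u with hf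
      have fq : ∀ n, n ≤ t → f n = q n := by
        intro n h1; simp only [hf]; rw [if_pos h1]
      have fw : f (t + 1) = w := by
        simp only [hf]; rw [if_neg (show ¬ t + 1 ≤ t by omega)]; simp
      have fu : f (t + 2) = u := by
        simp only [hf]
        rw [if_neg (show ¬ t + 2 ≤ t by omega), if_neg (show ¬ t + 2 = t + 1 by omega)]
      refine connected_of_fun H _ f (t + 3) (by omega) ?_ ?_ ?_
      · intro m hm
        rcases (show m ≤ t ∨ m = t + 1 ∨ m = t + 2 by omega) with h | h | h
        · rw [fq m h]; exact ⟨hmq _ h, by simp [hq_ne_z _ h]⟩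
        · rw [h, fw]; exact ⟨hmw, by simp [hwz]⟩
        · rw [h, fu]; exact ⟨hmu, by simp [huz]⟩
      · intro m hm
        rcases (show m + 1 ≤ t ∨ m = t ∨ m = t + 1 by omega) with h | h | h
        · rw [fq m (by omega), fq (m+1) h]; exact hch m (by omega)
        · rw [h, fq t le_rfl, fw]; exact Awqt.symm
        · rw [h, show t + 1 + 1 = t + 2 from rfl, fw, fu]; exact Auw.symm
      · intro y hy
        rcases (hmem y).1 hy.1 with h | h | h | ⟨j, hj, h⟩
        · exact ⟨t + 2, by omega, by rw [fu, h]⟩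
        · exact ⟨t + 1, by omega, by rw [fw, h]⟩
        · exact absurd h (by simpa using hy.2)
        · exact ⟨j, by omega, by rw [fq j hj, h]⟩
    · -- delete q i
      rw [← h]
      set f : ℕ → V := fun n => if n < i then q (i - 1 - n) else if n = i then u
        else if n = i + 1 then z else if n = i + 2 then w
        else q (t - (n - i - 3)) with hf
      have fL : ∀ n, n < i → f n = q (i - 1 - n) := by
        intro n h1; simp only [hf]; rw [if_pos h1]
      have fu : f i = u := by
        simp only [hf]; rw [if_neg (lt_irrefl i)]; simp
      have fz : f (i + 1) = z := by
        simp only [hf]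
        rw [if_neg (show ¬ i + 1 < i by omega), if_neg (show ¬ i + 1 = i by omega)]
        simp
      have fw : f (i + 2) = w := by
        simp only [hf]
        rw [if_neg (show ¬ i + 2 < i by omega), if_neg (show ¬ i + 2 = i by omega),
          if_neg (show ¬ i + 2 = i + 1 by omega)]; simp
      have fR : ∀ n, i + 3 ≤ n → f n = q (t - (n - i - 3)) := by
        intro n h1
        simp only [hf]
        rw [if_neg (show ¬ n < i by omega), if_neg (show ¬ n = i by omega),
          if_neg (show ¬ n = i + 1 by omega), if_neg (show ¬ n = i + 2 by omega)]
      refine connected_of_fun H _ f (t + 3) (by omega) ?_ ?_ ?_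
      · intro m hm
        rcases (show m < i ∨ m = i ∨ m = i + 1 ∨ m = i + 2 ∨ i + 3 ≤ m by omega)
          with h | h | h | h | h
        · rw [fL m h]
          exact ⟨hmq _ (by omega), by
            simp only [Set.mem_singleton_iff]
            exact hinj (i - 1 - m) i (by omega) hi⟩
        · rw [h, fu]; exact ⟨hmu, by simp [(hq_ne_u i hi).symm]⟩
        · rw [h, fz]; exact ⟨hmz, by simp [(hq_ne_z i hi).symm]⟩
        · rw [h, fw]; exact ⟨hmw, by simp [(hq_ne_w i hi).symm]⟩
        · rw [fR m h]
          exact ⟨hmq _ (by omega), by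
            simp only [Set.mem_singleton_iff]
            exact (hinj i (t - (m - i - 3)) (by omega) (by omega)).symm⟩
      · intro m hm
        rcases (show m + 1 < i ∨ m + 1 = i ∨ m = i ∨ m = i + 1 ∨ m = i + 2 ∨ i + 3 ≤ m
          by omega) with h | h | h | h | h | h
        · rw [fL m (by omega), fL (m+1) h,
            show i - 1 - m = (i - 1 - (m + 1)) + 1 by omega]
          exact (hch (i - 1 - (m + 1)) (by omega)).symm
        · rw [fL m (by omega), h, fu, show i - 1 - m = 0 by omega]
          exact Auq0.symm
        · rw [h, fu, fz]; exact Auz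
        · rw [h, show i + 1 + 1 = i + 2 from rfl, fz, fw]; exact Awz.symm
        · rw [h, show i + 2 + 1 = i + 3 from rfl, fw, fR (i + 3) le_rfl,
            show t - (i + 3 - i - 3) = t by omega]
          exact Awqt
        · rw [fR m h, fR (m + 1) (by omega),
            show t - (m - i - 3) = (t - (m + 1 - i - 3)) + 1 by omega]
          exact (hch (t - (m + 1 - i - 3)) (by omega)).symm
      · intro y hy
        rcases (hmem y).1 hy.1 with h | h | h | ⟨j, hj, h⟩
        · exact ⟨i, by omega, by rw [fu, h]⟩
        · exact ⟨i + 2, by omega, by rw [fw, h]⟩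
        · exact ⟨i + 1, by omega, by rw [fz, h]⟩
        · have hji : j ≠ i := by
            intro e
            rw [e] at h
            have hyne : y ≠ q i := by simpa using hy.2
            exact hyne h.symm
          rcases Nat.lt_or_ge j i with hj2 | hj2
          · refine ⟨i - 1 - j, by omega, ?_⟩
            rw [fL (i - 1 - j) (by omega), show i - 1 - (i - 1 - j) = j by omega, h]
          · have hj3 : i < j := by omega
            refine ⟨i + 3 + (t - j), by omega, ?_⟩
            rw [fR (i + 3 + (t - j)) (by omega),
              show t - (i + 3 + (t - j) - i - 3) = j by omega, h]
  · -- not clique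
    intro hcl
    exact hz_q 0 (by omega) (hcl hmz (hmq 0 (by omega)) (hq_ne_z 0 (by omega)).symm)
  · -- not cycle
    intro hcyc
    have h2 := hcyc.2.2 u hmu
    rw [hdu] at h2
    exact absurd h2 (by norm_num)
  · -- filter
    have hset : {x ∈ s | degIn H s x = 3} = {u, w} := by
      ext x
      simp only [Set.mem_setOf_eq, Set.mem_insert_iff, Set.mem_singleton_iff]
      constructor
      · rintro ⟨hx, h3⟩
        rcases (hmem x).1 hx with h | h | h | ⟨j, hj, h⟩
        · exact Or.inl h
        · exact Or.inr h
        · rw [h, hdz] at h3; exact absurd h3 (by norm_num)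
        · rw [← h, hdq j hj] at h3; exact absurd h3 (by norm_num)
      · rintro (h | h) <;> rw [h]
        · exact ⟨hmu, hdu⟩
        · exact ⟨hmw, hdw⟩
    rw [hset, Set.ncard_pair huw]
  · intro x hx
    rcases (hmem x).1 hx with h | h | h | ⟨j, hj, h⟩
    · rw [h]; exact Or.inl hdu
    · rw [h]; exact Or.inl hdw
    · rw [h]; exact Or.inr hdz
    · rw [← h]; exact Or.inr (hdq j hj)

/-- If `H` is 2-connected, neither a clique nor a cycle, and contains a triangle,
then `H` contains an induced subgraph `H'` that is 2-connected, not a clique, not a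
cycle, with exactly two vertices of degree 3 in `H'` and all other vertices of
degree 2 in `H'`. -/
theorem stmt1 (H : SimpleGraph V)
    (h2conn : TwoConnOn H Set.univ)
    (hnotclique : ¬ H.IsClique Set.univ)
    (hnotcycle : ¬ IsCycleOn H Set.univ)
    (htriangle : ∃ a b c : V, a ≠ b ∧ a ≠ c ∧ b ≠ c ∧ H.Adj a b ∧ H.Adj a c ∧ H.Adj b c) :
    ∃ s : Set V,
      TwoConnOn H s ∧ ¬ H.IsClique s ∧ ¬ IsCycleOn H s ∧
      {v ∈ s | degIn H s v = 3}.ncard = 2 ∧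
      ∀ v ∈ s, degIn H s v = 3 ∨ degIn H s v = 2 := by

  classical
  obtain ⟨a, b, c, hab, hac, hbc, Hab, Hac, Hbc⟩ := htriangle
  have htri : H.IsClique (({a, b, c} : Finset V) : Set V) := by
    intro x hx y hy hxy
    simp only [Finset.coe_insert, Set.mem_insert_iff, Finset.coe_singleton,
      Set.mem_singleton_iff] at hx hy
    rcases hx with h | h | h <;> rcases hy with h' | h' | h' <;> rw [h, h'] at hxy ⊢ <;>
      first
        | exact absurd rfl hxy
        | exact Hab | exact Hab.symm | exact Hac | exact Hac.symm
        | exact Hbc | exact Hbc.symm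
  set 𝒮 : Finset (Finset V) :=
    Finset.univ.filter (fun K => H.IsClique (K : Set V) ∧ a ∈ K ∧ b ∈ K ∧ c ∈ K) with h𝒮def
  have h𝒮 : ({a, b, c} : Finset V) ∈ 𝒮 := by
    simp only [h𝒮def, Finset.mem_filter, Finset.mem_univ, true_and]
    exact ⟨htri, by simp, by simp, by simp⟩
  obtain ⟨K, hK𝒮, hKmax⟩ := Finset.exists_max_image 𝒮 Finset.card ⟨_, h𝒮⟩
  rw [h𝒮def, Finset.mem_filter] at hK𝒮
  obtain ⟨-, hKcl, haK, hbK, hcK⟩ := hK𝒮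
  have hKmax' : ∀ v, v ∉ K → ¬ H.IsClique (insert v (K : Set V)) := by
    intro v hv hcl
    have hmem : insert v K ∈ 𝒮 := by
      rw [h𝒮def, Finset.mem_filter]
      refine ⟨Finset.mem_univ _, by rwa [Finset.coe_insert], ?_, ?_, ?_⟩ <;>
        exact Finset.mem_insert_of_mem (by assumption)
    have hle := hKmax _ hmem
    rw [Finset.card_insert_of_notMem hv] at hle
    omega
  have hout : ∃ x, x ∉ K := by
    by_contra hcon
    push_neg at hcon
    exact hnotclique (fun x _ y _ hxy => hKcl (hcon x) (hcon y) hxy)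
  have hnonnbr : ∀ v, v ∉ K → ∃ w, w ∈ K ∧ w ≠ v ∧ ¬ H.Adj v w := by
    intro v hv
    by_contra hcon
    push_neg at hcon
    refine hKmax' v hv ?_
    intro x hx y hy hxy
    rcases Set.mem_insert_iff.1 hx with h | h <;> rcases Set.mem_insert_iff.1 hy with h' | h'
    · rw [h, h'] at hxy; exact absurd rfl hxy
    · rw [h]; exact hcon y (Finset.mem_coe.1 h') (fun e => hxy (h.trans e.symm))
    · rw [h']; exact (hcon x (Finset.mem_coe.1 h) (fun e => hxy (e.trans h'.symm))).symm
    · exact hKcl h h' hxy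
  have hreach : ∀ x y : V, H.Reachable x y := by
    intro x y
    have h2 := h2conn.2.1.preconnected ⟨x, trivial⟩ ⟨y, trivial⟩
    exact h2.map (homIn H Set.univ)
  obtain ⟨x₀, hx₀⟩ := hout
  obtain ⟨u0, v0, hu0K, hv0K, hadj0⟩ := exists_cross ((hreach a x₀).some) haK hx₀
  -- a vertex of K distinct from u0
  have hk₁ : ∃ k₁, k₁ ∈ K ∧ k₁ ≠ u0 := by
    by_cases h : a = u0
    · exact ⟨b, hbK, fun e => hab (h.symm ▸ e ▸ rfl)⟩
    · exact ⟨a, haK, h⟩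
  obtain ⟨k₁, hk₁K, hk₁u⟩ := hk₁
  have hconu := h2conn.2.2 u0 trivial
  have hv0mem : v0 ∈ (Set.univ \ {u0} : Set V) :=
    ⟨trivial, by simp only [Set.mem_singleton_iff]; exact fun e => hv0K (e ▸ hu0K)⟩
  have hk₁mem : k₁ ∈ (Set.univ \ {u0} : Set V) :=
    ⟨trivial, by simpa using hk₁u⟩
  have hCand : ∃ t, ∃ q : ℕ → V, ∃ u w : V, u ∈ K ∧ w ∈ K ∧ u ≠ w ∧
      H.Adj u (q 0) ∧ H.Adj w (q t) ∧ (∀ i, i ≤ t → q i ∉ K) ∧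
      ∀ i, i < t → H.Adj (q i) (q (i+1)) := by
    obtain ⟨p⟩ := hconu.preconnected ⟨v0, hv0mem⟩ ⟨k₁, hk₁mem⟩
    set W := p.map (homIn H (Set.univ \ {u0})) with hW
    have h1 : W.support = v0 :: W.support.tail := SimpleGraph.Walk.support_eq_cons W
    have h2 : List.Chain' H.Adj W.support := SimpleGraph.Walk.isChain_adj_support W
    have h3 : k₁ ∈ W.support := SimpleGraph.Walk.end_mem_support W
    have h4 : ∀ x ∈ W.support, x ≠ u0 := by
      intro x hx e
      rw [hW, SimpleGraph.Walk.support_map] at hx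
      obtain ⟨y, hy, hval⟩ := List.mem_map.1 hx
      have hy2 : ¬ ((homIn H (Set.univ \ {u0})) y = u0) := fun e' => y.2.2 e'
      exact hy2 (hval.trans e)
    obtain ⟨l, hhead, hchainl, hk₁l, havoidl⟩ :
        ∃ l : List V, (l.getD 0 v0 = v0) ∧ List.Chain' H.Adj l ∧ k₁ ∈ l ∧
          ∀ x ∈ l, x ≠ u0 :=
      ⟨W.support, by rw [h1]; rfl, h2, h3, h4⟩
    have hlen : 0 < l.length := List.length_pos_iff.2 (List.ne_nil_of_mem hk₁l)
    have hq0 : ∀ (i) (h : i < l.length), l.getD i v0 = l.get ⟨i, h⟩ :=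
      fun i h => List.getD_eq_get l v0 ⟨i, h⟩
    have hchain0 : ∀ i, i + 1 < l.length → H.Adj (l.getD i v0) (l.getD (i+1) v0) := by
      intro i hi
      rw [hq0 i (by omega), hq0 (i+1) hi]
      exact List.isChain_iff_getElem.1 hchainl i (by rw [← Nat.lt_sub_iff_add_lt] at hi; omega)
    have havq : ∀ i, i < l.length → l.getD i v0 ≠ u0 := by
      intro i hi
      refine havoidl _ ?_
      rw [hq0 i hi]
      exact List.get_mem l _
    have hKhit : ∃ n, n < l.length ∧ l.getD n v0 ∈ K := by
      obtain ⟨⟨n, hn⟩, hget⟩ := List.mem_iff_get.1 hk₁l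
      exact ⟨n, hn, by rw [hq0 n hn, hget]; exact hk₁K⟩
    set n₁ : ℕ := Nat.find hKhit with hn₁def
    obtain ⟨hn₁len, hn₁K⟩ := Nat.find_spec hKhit
    have hbefore : ∀ m, m < n₁ → l.getD m v0 ∉ K := by
      intro m hm hK'
      exact Nat.find_min hKhit hm ⟨by omega, hK'⟩
    have hn₁pos : 0 < n₁ := by
      rcases Nat.eq_zero_or_pos n₁ with h | h
      · exfalso
        have h0 := hn₁K
        rw [hn₁def] at h
        rw [h] at h0
        rw [hhead] at h0
        exact hv0K h0
      · exact h
    refine ⟨n₁ - 1, fun i => l.getD i v0, u0, l.getD n₁ v0, hu0K, hn₁K,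
      (havq n₁ hn₁len).symm, ?_, ?_, ?_, ?_⟩
    · dsimp only; rw [hhead]; exact hadj0
    · have hc := hchain0 (n₁ - 1) (by omega)
      rw [show n₁ - 1 + 1 = n₁ by omega] at hc
      exact hc.symm
    · intro i hi; exact hbefore i (by omega)
    · intro i hi; exact hchain0 i (by omega)
  by_cases hcase : ∃ v, v ∉ K ∧ ∃ u₁, u₁ ∈ K ∧ ∃ u₂, u₂ ∈ K ∧ u₁ ≠ u₂ ∧ H.Adj v u₁ ∧ H.Adj v u₂
  · obtain ⟨v, hvK, u₁, hu₁, u₂, hu₂, hne12, hA1, hA2⟩ := hcase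
    obtain ⟨w, hwK, hwv, hnA⟩ := hnonnbr v hvK
    have hwu₁ : w ≠ u₁ := fun e => hnA (by rw [e]; exact hA1)
    have hwu₂ : w ≠ u₂ := fun e => hnA (by rw [e]; exact hA2)
    exact caseI H v u₁ u₂ w (fun e => hvK (by rw [e]; exact hu₁))
      (fun e => hvK (by rw [e]; exact hu₂)) hwv.symm hne12 hwu₁.symm hwu₂.symm
      hA1 hA2 hnA (hKcl hu₁ hu₂ hne12) (hKcl hu₁ hwK hwu₁.symm) (hKcl hu₂ hwK hwu₂.symm)
  · push_neg at hcase
    obtain ⟨q2, u, w, huK, hwK, huw, hu, hw, hqK, hch⟩ := Nat.find_spec hCand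
    set t : ℕ := Nat.find hCand with htdef
    have hmin : ∀ t', t' < t → ¬ (∃ q : ℕ → V, ∃ u w : V, u ∈ K ∧ w ∈ K ∧ u ≠ w ∧
        H.Adj u (q 0) ∧ H.Adj w (q t') ∧ (∀ i, i ≤ t' → q i ∉ K) ∧
        ∀ i, i < t' → H.Adj (q i) (q (i+1))) := fun t' h => Nat.find_min hCand h
    -- t ≥ 1
    have ht : 1 ≤ t := by
      by_contra h0
      have ht0 : t = 0 := by omega
      rw [ht0] at hw
      exact hcase (q2 0) (hqK 0 (by omega)) u huK w hwK huw hu.symm hw.symm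
    -- injectivity
    have hinj : ∀ i j, i < j → j ≤ t → q2 i ≠ q2 j := by
      intro i j hij hjt heq
      refine hmin (t - (j - i)) (by omega)
        ⟨fun n => if n ≤ i then q2 n else q2 (n + (j - i)), u, w, huK, hwK, huw, ?_, ?_, ?_, ?_⟩
      · dsimp only; rw [if_pos (Nat.zero_le i)]; exact hu
      · dsimp only
        by_cases hc : t - (j - i) ≤ i
        · rw [if_pos hc, show t - (j - i) = i by omega, heq, show j = t by omega]
          exact hw
        · rw [if_neg hc, show t - (j - i) + (j - i) = t by omega]
          exact hw
      · intro n hn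
        dsimp only
        by_cases hc : n ≤ i
        · rw [if_pos hc]; exact hqK n (by omega)
        · rw [if_neg hc]; exact hqK _ (by omega)
      · intro n hn
        dsimp only
        by_cases hc1 : n + 1 ≤ i
        · rw [if_pos (by omega : n ≤ i), if_pos hc1]; exact hch n (by omega)
        · by_cases hc2 : n ≤ i
          · rw [if_pos hc2, if_neg hc1, show n = i by omega,
              show i + 1 + (j - i) = j + 1 by omega, heq]
            exact hch j (by omega)
          · rw [if_neg hc2, if_neg hc1, show n + 1 + (j - i) = (n + (j - i)) + 1 by omega]
            exact hch _ (by omega)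
    -- no chords
    have hnochord : ∀ i j, i + 1 < j → j ≤ t → ¬ H.Adj (q2 i) (q2 j) := by
      intro i j hij hjt hadjc
      refine hmin (t - (j - i - 1)) (by omega)
        ⟨fun n => if n ≤ i then q2 n else q2 (n + (j - i - 1)), u, w, huK, hwK, huw,
          ?_, ?_, ?_, ?_⟩
      · dsimp only; rw [if_pos (Nat.zero_le i)]; exact hu
      · dsimp only
        rw [if_neg (by omega : ¬ t - (j - i - 1) ≤ i),
          show t - (j - i - 1) + (j - i - 1) = t by omega]
        exact hw
      · intro n hn
        dsimp only
        by_cases hc : n ≤ i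
        · rw [if_pos hc]; exact hqK n (by omega)
        · rw [if_neg hc]; exact hqK _ (by omega)
      · intro n hn
        dsimp only
        by_cases hc1 : n + 1 ≤ i
        · rw [if_pos (by omega : n ≤ i), if_pos hc1]; exact hch n (by omega)
        · by_cases hc2 : n ≤ i
          · rw [if_pos hc2, if_neg hc1, show n = i by omega,
              show i + 1 + (j - i - 1) = j by omega]
            exact hadjc
          · rw [if_neg hc2, if_neg hc1,
              show n + 1 + (j - i - 1) = (n + (j - i - 1)) + 1 by omega]
            exact hch _ (by omega)
    -- interior vertices have no neighbours in K
    have hint : ∀ i, 0 < i → i < t → ∀ k, k ∈ K → ¬ H.Adj k (q2 i) := by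
      intro i h0 hit k hkK hadjk
      by_cases hku : k = u
      · rw [hku] at hadjk
        refine hmin (t - i) (by omega)
          ⟨fun n => q2 (n + i), u, w, huK, hwK, huw, ?_, ?_, ?_, ?_⟩
        · dsimp only; rw [show 0 + i = i by omega]; exact hadjk
        · dsimp only; rw [show t - i + i = t by omega]; exact hw
        · intro n hn; dsimp only; exact hqK _ (by omega)
        · intro n hn
          dsimp only
          rw [show n + 1 + i = (n + i) + 1 by omega]
          exact hch _ (by omega)
      · exact hmin i hit ⟨q2, u, k, huK, hkK, fun e => hku e.symm, hu, hadjk,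
          fun n hn => hqK n (by omega), fun n hn => hch n (by omega)⟩
    -- ends
    have hend0 : ∀ k, k ∈ K → H.Adj k (q2 0) → k = u := by
      intro k hkK hk
      by_contra hne
      exact hcase (q2 0) (hqK 0 (by omega)) u huK k hkK (fun e => hne e.symm) hu.symm hk.symm
    have hendt : ∀ k, k ∈ K → H.Adj k (q2 t) → k = w := by
      intro k hkK hk
      by_contra hne
      exact hcase (q2 t) (hqK t le_rfl) w hwK k hkK (fun e => hne e.symm) hw.symm hk.symm
    have hu_q : ∀ i, 1 ≤ i → i ≤ t → ¬ H.Adj u (q2 i) := by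
      intro i h1 h2 hadjk
      rcases Nat.eq_or_lt_of_le h2 with he | hl
      · rw [he] at hadjk; exact huw (hendt u huK hadjk)
      · exact hint i h1 hl u huK hadjk
    have hw_q : ∀ i, i < t → ¬ H.Adj w (q2 i) := by
      intro i hi hadjk
      rcases Nat.eq_zero_or_pos i with he | hp
      · rw [he] at hadjk; exact huw (hend0 w hwK hadjk).symm
      · exact hint i hp hi w hwK hadjk
    -- pick z
    have hz : ∃ z, z ∈ K ∧ z ≠ u ∧ z ≠ w := by
      by_cases h1 : a = u ∨ a = w
      · by_cases h2 : b = u ∨ b = w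
        · refine ⟨c, hcK, fun e => ?_, fun e => ?_⟩
          · rcases h1 with h1 | h1
            · exact hac (h1.trans e.symm)
            · rcases h2 with h2 | h2
              · exact hbc (h2.trans e.symm)
              · exact hab (h1.trans h2.symm)
          · rcases h1 with h1 | h1
            · rcases h2 with h2 | h2
              · exact hab (h1.trans h2.symm)
              · exact hbc (h2.trans e.symm)
            · exact hac (h1.trans e.symm)
        · push_neg at h2
          exact ⟨b, hbK, h2.1, h2.2⟩
      · push_neg at h1
        exact ⟨a, haK, h1.1, h1.2⟩
    obtain ⟨z, hzK, hzu, hzw⟩ := hz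
    have hz_q : ∀ i, i ≤ t → ¬ H.Adj z (q2 i) := by
      intro i hi hadjk
      rcases Nat.eq_zero_or_pos i with he | hp
      · rw [he] at hadjk; exact hzu (hend0 z hzK hadjk)
      · rcases Nat.eq_or_lt_of_le hi with he | hl
        · rw [he] at hadjk; exact hzw (hendt z hzK hadjk)
        · exact hint i hp hl z hzK hadjk
    exact caseII H q2 t u w z ht huw hzu.symm hzw.symm
      (hKcl huK hwK huw) (hKcl huK hzK hzu.symm) (hKcl hwK hzK hzw.symm)
      hu hw hch hinj hnochord hu_q hw_q hz_q
      (fun i hi e => hqK i hi (by rw [e]; exact huK))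
      (fun i hi e => hqK i hi (by rw [e]; exact hwK))
      (fun i hi e => hqK i hi (by rw [e]; exact hzK))

end Stmt1
end

section
/- Let C be a shortest (minimum-length) induced cycle in a graph H, with |C| ≥ 4, and let v be a vertex not on C with at least two neighbors on C. Then |C| = 4 and the two neighbors of v on C are at distance 2 along C (opposite vertices of the 4-cycle). -/
namespace Stmt5

variable {V : Type*} [Fintype V]

/-- The degree of `x` inside the subgraph of `H` induced by `s`. -/
noncomputable def degIn (H : SimpleGraph V) (s : Set V) (x : V) : ℕ :=
  {w | w ∈ s ∧ H.Adj x w}.ncard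

/-- `s` carries an induced cycle of `H`: the induced subgraph is connected and
2-regular with at least 3 vertices. -/
def IsCycleOn (H : SimpleGraph V) (s : Set V) : Prop :=
  3 ≤ s.ncard ∧ (H.induce s).Connected ∧ ∀ v ∈ s, degIn H s v = 2

open SimpleGraph

section Helpers

variable {W : Type*} {G : SimpleGraph W}

/-- There is a walk of length at most `i` from the start of a walk to its `i`-th vertex. -/
lemma exists_walk_to_getVert {u v : W} (w : G.Walk u v) (i : ℕ) :
    ∃ q : G.Walk u (w.getVert i), q.length ≤ i := by
  induction w generalizing i with
  | nil =>
    exact ⟨Walk.nil.copy rfl (by rw [Walk.getVert_of_length_le _ (by simp)]), by simp⟩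
  | cons h p ih =>
    cases i with
    | zero => exact ⟨Walk.nil.copy rfl (by rw [Walk.getVert_zero]), by simp⟩
    | succ i =>
      obtain ⟨q, hq⟩ := ih i
      exact ⟨(Walk.cons h q).copy rfl (by rw [Walk.getVert_cons_succ]), by simpa using hq⟩

/-- There is a walk of length at most `length - i` from the `i`-th vertex to the end. -/
lemma exists_walk_from_getVert {u v : W} (w : G.Walk u v) (i : ℕ) :
    ∃ q : G.Walk (w.getVert i) v, q.length ≤ w.length - i := by
  induction w generalizing i with
  | nil =>
    exact ⟨Walk.nil.copy (by rw [Walk.getVert_of_length_le _ (by simp)]) rfl, by simp⟩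
  | cons h p ih =>
    cases i with
    | zero =>
      exact ⟨(Walk.cons h p).copy (by rw [Walk.getVert_zero]) rfl, by simp⟩
    | succ i =>
      obtain ⟨q, hq⟩ := ih i
      refine ⟨q.copy (by rw [Walk.getVert_cons_succ]) rfl, ?_⟩
      simpa using hq.trans (by omega)

lemma dist_start_getVert_le {u v : W} (w : G.Walk u v) (i : ℕ) :
    G.dist u (w.getVert i) ≤ i := by
  obtain ⟨q, hq⟩ := exists_walk_to_getVert w i
  exact (SimpleGraph.dist_le q).trans hq

lemma dist_getVert_end_le {u v : W} (w : G.Walk u v) (i : ℕ) :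
    G.dist (w.getVert i) v ≤ w.length - i := by
  obtain ⟨q, hq⟩ := exists_walk_from_getVert w i
  exact (SimpleGraph.dist_le q).trans hq

end Helpers

section Restrict

variable {V' : Type*}

/-- The graph on `V` whose edges are the edges of `H` inside `s`. -/
def restrict (H : SimpleGraph V') (s : Set V') : SimpleGraph V' where
  Adj x y := x ∈ s ∧ y ∈ s ∧ H.Adj x y
  symm := by constructor; rintro x y ⟨hx, hy, h⟩; exact ⟨hy, hx, h.symm⟩
  loopless := by constructor; rintro x ⟨_, _, h⟩; exact h.ne rfl

/-- The inclusion homomorphism from the induced subgraph to the restricted graph. -/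
def toRestrict (H : SimpleGraph V') (s : Set V') : H.induce s →g restrict H s where
  toFun := Subtype.val
  map_rel' := fun {a b} h => ⟨a.2, b.2, h⟩

lemma restrict_reachable {H : SimpleGraph V'} {s : Set V'} (hconn : (H.induce s).Connected)
    {p q : V'} (hp : p ∈ s) (hq : q ∈ s) : (restrict H s).Reachable p q :=
  (hconn.preconnected ⟨p, hp⟩ ⟨q, hq⟩).map (toRestrict H s)

lemma restrict_dist_triangle {H : SimpleGraph V'} {s : Set V'} (hconn : (H.induce s).Connected)
    {p q r : V'} (hp : p ∈ s) (hq : q ∈ s) (hr : r ∈ s) :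
    (restrict H s).dist p r ≤ (restrict H s).dist p q + (restrict H s).dist q r := by
  obtain ⟨w1, hw1⟩ := (restrict_reachable hconn hp hq).exists_walk_length_eq_dist
  obtain ⟨w2, hw2⟩ := (restrict_reachable hconn hq hr).exists_walk_length_eq_dist
  calc (restrict H s).dist p r ≤ (w1.append w2).length := SimpleGraph.dist_le _
  _ = _ := by rw [Walk.length_append, hw1, hw2]

end Restrict

lemma triangle_case {H : SimpleGraph V} {s : Set V}
    (hmin : ∀ t : Set V, IsCycleOn H t → s.ncard ≤ t.ncard)
    (h4 : 4 ≤ s.ncard) {v : V} (hv : v ∉ s) :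
    ∀ a ∈ s, ∀ b ∈ s, H.Adj v a → H.Adj v b → H.Adj a b → False := by
  intro a ha b hb hva hvb hab
  have hab' : a ≠ b := hab.ne
  have hva' : v ≠ a := fun h => hv (h ▸ ha)
  have hvb' : v ≠ b := fun h => hv (h ▸ hb)
  set t : Set V := {v, a, b} with ht
  have htc : t.ncard = 3 := by
    rw [Set.ncard_insert_of_notMem (by simp [hva', hvb']), Set.ncard_pair hab']
  have hadjall : ∀ p ∈ t, ∀ q ∈ t, p ≠ q → H.Adj p q := by
    intro p hp q hq hne
    simp only [ht, Set.mem_insert_iff, Set.mem_singleton_iff] at hp hq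
    rcases hp with rfl | rfl | rfl <;> rcases hq with rfl | rfl | rfl <;>
      first
        | exact absurd rfl hne
        | assumption
        | exact hva.symm
        | exact hvb.symm
        | exact hab.symm
  have hcyc : IsCycleOn H t := by
    refine ⟨by omega, ?_, ?_⟩
    · haveI : Nonempty ↥t := ⟨⟨v, by simp [ht]⟩⟩
      refine ⟨fun p q => ?_⟩
      by_cases hpq : (p : V) = (q : V)
      · exact (Subtype.ext hpq : p = q) ▸ Reachable.refl _
      · exact SimpleGraph.Adj.reachable (hadjall p p.2 q q.2 hpq)
    · intro z hz
      simp only [ht, Set.mem_insert_iff, Set.mem_singleton_iff] at hz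
      show ({w | w ∈ t ∧ H.Adj z w}).ncard = 2
      rcases hz with rfl | rfl | rfl
      · have : {w | w ∈ t ∧ H.Adj z w} = {a, b} := by
          ext w
          simp only [ht, Set.mem_insert_iff, Set.mem_singleton_iff, Set.mem_setOf_eq]
          constructor
          · rintro ⟨rfl | rfl | rfl, hadj⟩
            · exact absurd rfl hadj.ne
            · exact Or.inl rfl
            · exact Or.inr rfl
          · rintro (rfl | rfl)
            · exact ⟨Or.inr (Or.inl rfl), hva⟩
            · exact ⟨Or.inr (Or.inr rfl), hvb⟩
        rw [this, Set.ncard_pair hab']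
      · have : {w | w ∈ t ∧ H.Adj z w} = {v, b} := by
          ext w
          simp only [ht, Set.mem_insert_iff, Set.mem_singleton_iff, Set.mem_setOf_eq]
          constructor
          · rintro ⟨rfl | rfl | rfl, hadj⟩
            · exact Or.inl rfl
            · exact absurd rfl hadj.ne
            · exact Or.inr rfl
          · rintro (rfl | rfl)
            · exact ⟨Or.inl rfl, hva.symm⟩
            · exact ⟨Or.inr (Or.inr rfl), hab⟩
        rw [this, Set.ncard_pair hvb']
      · have : {w | w ∈ t ∧ H.Adj z w} = {v, a} := by
          ext w
          simp only [ht, Set.mem_insert_iff, Set.mem_singleton_iff, Set.mem_setOf_eq]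
          constructor
          · rintro ⟨rfl | rfl | rfl, hadj⟩
            · exact Or.inl rfl
            · exact Or.inr rfl
            · exact absurd rfl hadj.ne
          · rintro (rfl | rfl)
            · exact ⟨Or.inl rfl, hvb.symm⟩
            · exact ⟨Or.inr (Or.inl rfl), hab.symm⟩
        rw [this, Set.ncard_pair hva']
  have := hmin t hcyc
  omega

/-- Let `s` be a shortest induced cycle of `H` of length at least 4 and `v ∉ s`
have at least two neighbors on `s`. Then `s` has exactly 4 vertices, `v` has exactly
two neighbors on `s`, and these two neighbors are non-adjacent, i.e. at distance 2
along the 4-cycle (opposite vertices). -/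
theorem stmt5 (H : SimpleGraph V) (s : Set V)
    (hcyc : IsCycleOn H s)
    (hmin : ∀ t : Set V, IsCycleOn H t → s.ncard ≤ t.ncard)
    (h4 : 4 ≤ s.ncard)
    (v : V) (hv : v ∉ s)
    (h2nb : 2 ≤ {w ∈ s | H.Adj v w}.ncard) :
    s.ncard = 4 ∧ {w ∈ s | H.Adj v w}.ncard = 2 ∧
      ∀ a ∈ s, ∀ b ∈ s, H.Adj v a → H.Adj v b → a ≠ b → ¬ H.Adj a b := by
  classical
  obtain ⟨hs3, hsconn, hsdeg⟩ := hcyc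
  have htri := triangle_case hmin h4 hv
  set G : SimpleGraph V := restrict H s with hGdef
  set DS : Set ℕ :=
    {n | ∃ p q : V, p ∈ s ∧ q ∈ s ∧ H.Adj v p ∧ H.Adj v q ∧ p ≠ q ∧ G.dist p q = n} with hDSdef
  have hDSne : DS.Nonempty := by
    obtain ⟨p, hp, q, hq, hne⟩ :=
      (Set.one_lt_ncard (Set.toFinite _)).mp (by omega : 1 < ({w ∈ s | H.Adj v w}).ncard)
    exact ⟨G.dist p q, p, q, hp.1, hq.1, hp.2, hq.2, hne, rfl⟩
  set d : ℕ := sInf DS with hd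
  obtain ⟨a, b, ha, hb, hva, hvb, hne, hdab⟩ : d ∈ DS := Nat.sInf_mem hDSne
  have hdmin : ∀ p q : V, p ∈ s → q ∈ s → H.Adj v p → H.Adj v q → p ≠ q → d ≤ G.dist p q :=
    fun p q h1 h2 h3 h4' h5 => Nat.sInf_le ⟨p, q, h1, h2, h3, h4', h5, rfl⟩
  have hrab : G.Reachable a b := restrict_reachable hsconn ha hb
  have hd0 : d ≠ 0 := fun h0 => hne (hrab.dist_eq_zero_iff.mp (h0 ▸ hdab))
  have hd1 : d ≠ 1 := by
    intro h1
    have hone : G.dist a b = 1 := by rw [hdab, h1]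
    exact htri a ha b hb hva hvb (SimpleGraph.dist_eq_one_iff_adj.mp hone).2.2
  have hd2 : 2 ≤ d := by omega
  obtain ⟨w, hwlen⟩ := hrab.exists_walk_length_eq_dist
  rw [hdab] at hwlen
  set x : ℕ → V := fun i => w.getVert i with hx
  have hx0 : x 0 = a := w.getVert_zero
  have hxd : x d = b := by rw [hx]; simp only; rw [← hwlen]; exact w.getVert_length
  have hmem : ∀ i, x i ∈ s := by
    intro i
    rcases Nat.lt_or_ge i w.length with h | h
    · exact (w.adj_getVert_succ h).1
    · show w.getVert i ∈ s
      rw [w.getVert_of_length_le h]; exact hb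
  have hkey : ∀ i ≤ d, G.dist a (x i) = i := by
    intro i hi
    have h1 : G.dist a (x i) ≤ i := dist_start_getVert_le w i
    have h2 : G.dist (x i) b ≤ w.length - i := dist_getVert_end_le w i
    rw [hwlen] at h2
    have h3 : G.dist a b ≤ G.dist a (x i) + G.dist (x i) b :=
      restrict_dist_triangle hsconn ha (hmem i) hb
    rw [hdab] at h3
    omega
  have hinj : ∀ i ≤ d, ∀ j ≤ d, x i = x j → i = j := by
    intro i hi j hj h
    have h1 := hkey i hi
    rw [h, hkey j hj] at h1
    omega
  have hadjc : ∀ i < d, H.Adj (x i) (x (i + 1)) := by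
    intro i hi
    exact (w.adj_getVert_succ (by omega)).2.2
  have hnoadj : ∀ i ≤ d, ∀ j ≤ d, H.Adj (x i) (x j) → i = j + 1 ∨ j = i + 1 := by
    intro i hi j hj hadj
    have hGadj : G.Adj (x i) (x j) := ⟨hmem i, hmem j, hadj⟩
    have h1 : G.dist (x i) (x j) = 1 := SimpleGraph.dist_eq_one_iff_adj.mpr hGadj
    have t1 : G.dist a (x j) ≤ G.dist a (x i) + G.dist (x i) (x j) :=
      restrict_dist_triangle hsconn ha (hmem i) (hmem j)
    have t2 : G.dist a (x i) ≤ G.dist a (x j) + G.dist (x j) (x i) :=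
      restrict_dist_triangle hsconn ha (hmem j) (hmem i)
    rw [hkey i hi, hkey j hj, h1] at t1
    rw [hkey i hi, hkey j hj, SimpleGraph.dist_comm, h1] at t2
    have hij : i ≠ j := fun h => hadj.ne (h ▸ rfl)
    omega
  have hint : ∀ i, 0 < i → i < d → ¬ H.Adj v (x i) := by
    intro i h0 hid hadj
    have hne' : a ≠ x i := by
      intro h
      have h1 := hkey i (le_of_lt hid)
      rw [← h, SimpleGraph.dist_self] at h1
      omega
    have h2 := hdmin a (x i) ha (hmem i) hva hadj hne'
    rw [hkey i (le_of_lt hid)] at h2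
    omega
  set X : Set V := x '' Set.Iic d with hX
  have hXs : X ⊆ s := by rintro _ ⟨i, _, rfl⟩; exact hmem i
  have hvX : v ∉ X := fun h => hv (hXs h)
  have hXcard : X.ncard = d + 1 := by
    have hIic : (Set.Iic d).ncard = d + 1 := by
      rw [← Finset.coe_Iic, Set.ncard_coe_finset, Nat.card_Iic]
    rw [hX, Set.ncard_image_of_injOn
      (fun i hi j hj h => hinj i (Set.mem_Iic.mp hi) j (Set.mem_Iic.mp hj) h), hIic]
  set T : Set V := insert v X with hT
  have hTcard : T.ncard = d + 2 := by
    rw [hT, Set.ncard_insert_of_notMem hvX, hXcard]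
  have hmemT : ∀ i, i ≤ d → x i ∈ T := fun i hi => Set.mem_insert_iff.mpr (Or.inr ⟨i, hi, rfl⟩)
  have hvT : v ∈ T := Set.mem_insert _ _
  have hx0d : x 0 ≠ x d := fun h => by have := hinj 0 (by omega) d (le_refl d) h; omega
  have hTcyc : IsCycleOn H T := by
    refine ⟨by omega, ?_, ?_⟩
    · haveI : Nonempty ↥T := ⟨⟨v, hvT⟩⟩
      have hreach : ∀ i (hi : i ≤ d), (H.induce T).Reachable ⟨v, hvT⟩ ⟨x i, hmemT i hi⟩ := by
        intro i
        induction i with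
        | zero =>
          intro _
          refine SimpleGraph.Adj.reachable ?_
          show H.Adj v (x 0)
          rw [hx0]; exact hva
        | succ i ih =>
          intro hi
          refine (ih (by omega)).trans (SimpleGraph.Adj.reachable ?_)
          show H.Adj (x i) (x (i + 1))
          exact hadjc i (by omega)
      have hto : ∀ r : ↥T, (H.induce T).Reachable ⟨v, hvT⟩ r := by
        rintro ⟨r, hr⟩
        rcases Set.mem_insert_iff.mp hr with rfl | ⟨i, hi, rfl⟩
        · exact Reachable.refl _
        · exact hreach i hi
      refine ⟨fun p q => (hto p).symm.trans (hto q)⟩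
    · intro z hz
      show ({w | w ∈ T ∧ H.Adj z w}).ncard = 2
      rcases Set.mem_insert_iff.mp hz with rfl | ⟨i, hi, rfl⟩
      · have hset : {w | w ∈ T ∧ H.Adj z w} = {x 0, x d} := by
          ext u
          simp only [Set.mem_setOf_eq, Set.mem_insert_iff, Set.mem_singleton_iff]
          constructor
          · rintro ⟨hu, hadj⟩
            rcases Set.mem_insert_iff.mp hu with rfl | ⟨j, hj, rfl⟩
            · exact absurd rfl hadj.ne
            · have hj' : j ≤ d := hj
              rcases Nat.eq_zero_or_pos j with rfl | hj0
              · exact Or.inl rfl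
              · rcases Nat.lt_or_ge j d with hjd | hjd
                · exact absurd hadj (hint j hj0 hjd)
                · have : j = d := by omega
                  exact Or.inr (by rw [this])
          · rintro (rfl | rfl)
            · exact ⟨hmemT 0 (by omega), by rw [hx0]; exact hva⟩
            · exact ⟨hmemT d (le_refl d), by rw [hxd]; exact hvb⟩
        rw [hset, Set.ncard_pair hx0d]
      · rcases Nat.eq_zero_or_pos i with rfl | hi0
        · -- z = x 0
          have hset : {w | w ∈ T ∧ H.Adj (x 0) w} = {v, x 1} := by
            ext u
            simp only [Set.mem_setOf_eq, Set.mem_insert_iff, Set.mem_singleton_iff]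
            constructor
            · rintro ⟨hu, hadj⟩
              rcases Set.mem_insert_iff.mp hu with rfl | ⟨j, hj, rfl⟩
              · exact Or.inl rfl
              · have hj' : j ≤ d := hj
                have := hnoadj 0 (by omega) j hj' hadj
                have : j = 1 := by omega
                exact Or.inr (by rw [this])
            · rintro (rfl | rfl)
              · exact ⟨hvT, by rw [hx0]; exact hva.symm⟩
              · exact ⟨hmemT 1 (by omega), hadjc 0 (by omega)⟩
          rw [hset, Set.ncard_pair (fun h => hv (by rw [h]; exact hmem 1))]
        · have hi' : i ≤ d := hi
          rcases Nat.lt_or_ge i d with hid | hid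
          · -- internal
            have hii : i - 1 + 1 = i := by omega
            have hset : {w | w ∈ T ∧ H.Adj (x i) w} = {x (i - 1), x (i + 1)} := by
              ext u
              simp only [Set.mem_setOf_eq, Set.mem_insert_iff, Set.mem_singleton_iff]
              constructor
              · rintro ⟨hu, hadj⟩
                rcases Set.mem_insert_iff.mp hu with rfl | ⟨j, hj, rfl⟩
                · exact absurd hadj.symm (hint i hi0 hid)
                · have hj' : j ≤ d := hj
                  rcases hnoadj i hi' j hj' hadj with h | h
                  · exact Or.inl (by congr 1; omega)
                  · exact Or.inr (by rw [h])
              · rintro (rfl | rfl)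
                · refine ⟨hmemT (i - 1) (by omega), ?_⟩
                  have := hadjc (i - 1) (by omega)
                  rw [hii] at this
                  exact this.symm
                · exact ⟨hmemT (i + 1) (by omega), hadjc i hid⟩
            rw [hset, Set.ncard_pair (fun h => by have := hinj (i - 1) (by omega) (i + 1) (by omega) h; omega)]
          · -- z = x d
            have hid' : i = d := by omega
            have hii : i - 1 + 1 = i := by omega
            have hset : {w | w ∈ T ∧ H.Adj (x i) w} = {v, x (i - 1)} := by
              ext u
              simp only [Set.mem_setOf_eq, Set.mem_insert_iff, Set.mem_singleton_iff]
              constructor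
              · rintro ⟨hu, hadj⟩
                rcases Set.mem_insert_iff.mp hu with rfl | ⟨j, hj, rfl⟩
                · exact Or.inl rfl
                · have hj' : j ≤ d := hj
                  rcases hnoadj i hi' j hj' hadj with h | h
                  · exact Or.inr (by congr 1; omega)
                  · omega
              · rintro (rfl | rfl)
                · exact ⟨hvT, by rw [hid', hxd]; exact hvb.symm⟩
                · refine ⟨hmemT (i - 1) (by omega), ?_⟩
                  have := hadjc (i - 1) (by omega)
                  rw [hii] at this
                  exact this.symm
            rw [hset, Set.ncard_pair (fun h => hv (by rw [h]; exact hmem (i - 1)))]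
  have hsle : s.ncard ≤ d + 2 := by
    have := hmin T hTcyc
    omega
  -- find the extra vertex y
  have hNa : ({w | w ∈ s ∧ H.Adj a w}).ncard = 2 := hsdeg a ha
  obtain ⟨y, hys, hay, hyX⟩ : ∃ y, y ∈ s ∧ H.Adj a y ∧ y ∉ X := by
    by_contra hcon
    push_neg at hcon
    have hsub : {w | w ∈ s ∧ H.Adj a w} ⊆ {x 1} := by
      rintro u ⟨hus, hadj⟩
      obtain ⟨i, hi, rfl⟩ := hcon u hus hadj
      have hi' : i ≤ d := hi
      have h1 : H.Adj (x 0) (x i) := by rw [hx0]; exact hadj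
      have := hnoadj 0 (by omega) i hi' h1
      have : i = 1 := by omega
      simp [this]
    have := Set.ncard_le_ncard hsub (Set.toFinite _)
    rw [Set.ncard_singleton] at this
    omega
  have hYsub : insert y X ⊆ s := Set.insert_subset hys hXs
  have hYcard : (insert y X).ncard = d + 2 := by
    rw [Set.ncard_insert_of_notMem hyX, hXcard]
  have hsge : d + 2 ≤ s.ncard := by
    have := Set.ncard_le_ncard hYsub (Set.toFinite _)
    omega
  have hseq : s = insert y X :=
    (Set.eq_of_subset_of_ncard_le hYsub (by omega) (Set.toFinite _)).symm
  have hNint : ∀ i, 0 < i → i < d → {w | w ∈ s ∧ H.Adj (x i) w} = {x (i - 1), x (i + 1)} := by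
    intro i h0 hid
    have hii : i - 1 + 1 = i := by omega
    have hsub : ({x (i - 1), x (i + 1)} : Set V) ⊆ {w | w ∈ s ∧ H.Adj (x i) w} := by
      rintro u (rfl | rfl)
      · refine ⟨hmem _, ?_⟩
        have := hadjc (i - 1) (by omega)
        rw [hii] at this
        exact this.symm
      · exact ⟨hmem _, hadjc i hid⟩
    have hc2 := hsdeg (x i) (hmem i)
    have hpc : ({x (i - 1), x (i + 1)} : Set V).ncard = 2 :=
      Set.ncard_pair (fun h => by have := hinj (i - 1) (by omega) (i + 1) (by omega) h; omega)
    exact (Set.eq_of_subset_of_ncard_le hsub (by rw [hpc]; exact le_of_eq (hsdeg (x i) (hmem i))) (Set.toFinite _)).symm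
  have hyb : H.Adj y b := by
    have hNy : ({w | w ∈ s ∧ H.Adj y w}).ncard = 2 := hsdeg y hys
    have hsub : {w | w ∈ s ∧ H.Adj y w} ⊆ {x 0, x d} := by
      rintro u ⟨hus, hadj⟩
      rw [hseq] at hus
      simp only [Set.mem_insert_iff, Set.mem_singleton_iff]
      rcases Set.mem_insert_iff.mp hus with rfl | ⟨i, hi, rfl⟩
      · exact absurd rfl hadj.ne
      · have hi' : i ≤ d := hi
        rcases Nat.eq_zero_or_pos i with rfl | hi0
        · exact Or.inl rfl
        · rcases Nat.lt_or_ge i d with hid | hid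
          · exfalso
            have hmemN : y ∈ {w | w ∈ s ∧ H.Adj (x i) w} := ⟨hys, hadj.symm⟩
            rw [hNint i hi0 hid] at hmemN
            rcases hmemN with h | h
            · exact hyX ⟨i - 1, Set.mem_Iic.mpr (by omega), h.symm⟩
            · exact hyX ⟨i + 1, Set.mem_Iic.mpr (by omega), h.symm⟩
          · have : i = d := by omega
            exact Or.inr (by rw [this])
    have heq : {w | w ∈ s ∧ H.Adj y w} = {x 0, x d} :=
      Set.eq_of_subset_of_ncard_le hsub (by rw [Set.ncard_pair hx0d, hNy]) (Set.toFinite _)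
    have : x d ∈ {w | w ∈ s ∧ H.Adj y w} := by rw [heq]; exact Or.inr rfl
    rw [hxd] at this
    exact this.2
  have hdle2 : d ≤ 2 := by
    have hGay : G.Adj a y := ⟨ha, hys, hay⟩
    have hGyb : G.Adj y b := ⟨hys, hb, hyb⟩
    have := SimpleGraph.dist_le (Walk.cons hGay (Walk.cons hGyb Walk.nil))
    rw [hdab] at this
    simpa using this
  have hdeq : d = 2 := le_antisymm hdle2 hd2
  have hscard : s.ncard = 4 := by omega
  have hvy : ¬ H.Adj v y := fun h => htri y hys a ha h hva hay.symm
  have hNv : {w | w ∈ s ∧ H.Adj v w} = {x 0, x d} := by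
    ext u
    simp only [Set.mem_setOf_eq, Set.mem_insert_iff, Set.mem_singleton_iff]
    constructor
    · rintro ⟨hus, hadj⟩
      rw [hseq] at hus
      rcases Set.mem_insert_iff.mp hus with rfl | ⟨i, hi, rfl⟩
      · exact absurd hadj hvy
      · have hi' : i ≤ d := hi
        rcases Nat.eq_zero_or_pos i with rfl | hi0
        · exact Or.inl rfl
        · rcases Nat.lt_or_ge i d with hid | hid
          · exact absurd hadj (hint i hi0 hid)
          · have : i = d := by omega
            exact Or.inr (by rw [this])
    · rintro (rfl | rfl)
      · exact ⟨hmem 0, by rw [hx0]; exact hva⟩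
      · exact ⟨hmem d, by rw [hxd]; exact hvb⟩
  refine ⟨hscard, ?_, fun a' ha' b' hb' h1 h2 _ h3 => htri a' ha' b' hb' h1 h2 h3⟩
  show ({w | w ∈ s ∧ H.Adj v w}).ncard = 2
  rw [hNv, Set.ncard_pair hx0d]

end Stmt5
end

section
/- Let T be a tree on m vertices and let x ≥ 1 be an integer. Then there exists a set B of at most x vertices of T such that every vertex of T is within distance at most ⌈2(m-1)/x⌉ (in T) from some vertex of B. -/
namespace Stmt9

open SimpleGraph

variable {V : Type*} [Fintype V]

private lemma exists_walk_getVert {W : Type*} {G : SimpleGraph W} {a b : W} (w : G.Walk a b) :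
    ∀ i j, i ≤ j → j ≤ w.length →
      ∃ p : G.Walk (w.getVert i) (w.getVert j), p.length = j - i := by
  intro i j hij hj
  induction j with
  | zero =>
    obtain rfl : i = 0 := Nat.le_zero.mp hij
    exact ⟨Walk.nil, by simp⟩
  | succ k ih =>
    rcases Nat.lt_or_ge i (k + 1) with h | h
    · have hik : i ≤ k := Nat.lt_succ_iff.mp h
      obtain ⟨p, hp⟩ := ih hik (Nat.le_of_succ_le hj)
      refine ⟨p.concat (w.adj_getVert_succ hj), ?_⟩
      rw [Walk.length_concat, hp]
      omega
    · obtain rfl : i = k + 1 := le_antisymm hij h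
      exact ⟨Walk.nil, by simp⟩

private lemma exists_crossing {W : Type*} {G : SimpleGraph W} (P : W → Prop) :
    ∀ {a b : W} (_ : G.Walk a b), P a → ¬ P b → ∃ c d, G.Adj c d ∧ P c ∧ ¬ P d := by
  intro a b p
  induction p with
  | nil => intro h h'; exact absurd h h'
  | @cons u v w h q ih =>
    intro ha hb
    by_cases hc : P v
    · exact ih hc hb
    · exact ⟨u, v, h, ha, hc⟩

private lemma grow [DecidableEq V] {G : SimpleGraph V} (hG : G.Preconnected) (v₀ : V) :
    ∀ (n : ℕ) (w : G.Walk v₀ v₀), (Finset.univ \ w.support.toFinset).card ≤ n →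
      w.length ≤ 2 * (w.support.toFinset.card - 1) →
      ∃ w' : G.Walk v₀ v₀, (∀ u, u ∈ w'.support) ∧
        w'.length ≤ 2 * (Fintype.card V - 1) := by
  intro n
  induction n with
  | zero =>
    intro w hcard hlen
    by_cases hall : ∀ u, u ∈ w.support
    · have huniv : w.support.toFinset = Finset.univ :=
        Finset.eq_univ_of_forall (by simpa using hall)
      rw [huniv, Finset.card_univ] at hlen
      exact ⟨w, hall, hlen⟩
    · push_neg at hall
      obtain ⟨u, hu⟩ := hall
      have : u ∈ Finset.univ \ w.support.toFinset := by simp [hu]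
      have := Finset.card_pos.mpr ⟨u, this⟩
      omega
  | succ n ih =>
    intro w hcard hlen
    by_cases hall : ∀ u, u ∈ w.support
    · have huniv : w.support.toFinset = Finset.univ :=
        Finset.eq_univ_of_forall (by simpa using hall)
      rw [huniv, Finset.card_univ] at hlen
      exact ⟨w, hall, hlen⟩
    · push_neg at hall
      obtain ⟨u, hu⟩ := hall
      obtain ⟨p⟩ := hG v₀ u
      obtain ⟨c, d, hcd, hc, hd⟩ :=
        exists_crossing (· ∈ w.support) p w.start_mem_support hu
      set w' : G.Walk v₀ v₀ :=
        (w.takeUntil c hc).append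
          (Walk.cons hcd (Walk.cons hcd.symm (w.dropUntil c hc))) with hw'
      have hsplit := congr_arg Walk.length (w.take_spec hc)
      rw [Walk.length_append] at hsplit
      have hlen' : w'.length = w.length + 2 := by
        rw [hw', Walk.length_append, Walk.length_cons, Walk.length_cons]
        omega
      have hsub : ∀ z ∈ w.support, z ∈ w'.support := by
        intro z hz
        rw [← w.take_spec hc, Walk.mem_support_append_iff] at hz
        rw [hw', Walk.mem_support_append_iff]
        rcases hz with hz | hz
        · exact Or.inl hz
        · right
          rw [Walk.support_cons, Walk.support_cons]
          simp only [List.mem_cons]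
          tauto
      have hd' : d ∈ w'.support := by
        rw [hw', Walk.mem_support_append_iff]
        right
        rw [Walk.support_cons, Walk.support_cons]
        simp
      have hsubF : insert d w.support.toFinset ⊆ w'.support.toFinset := by
        intro z hz
        rw [Finset.mem_insert] at hz
        rcases hz with rfl | hz
        · simpa using hd'
        · simp only [List.mem_toFinset] at hz ⊢
          exact hsub z hz
      have hcardle : w.support.toFinset.card + 1 ≤ w'.support.toFinset.card := by
        have h1 := Finset.card_le_card hsubF
        rwa [Finset.card_insert_of_notMem (by simpa using hd)] at h1
      have hpos : 1 ≤ w.support.toFinset.card :=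
        Finset.card_pos.mpr ⟨v₀, by simpa using w.start_mem_support⟩
      have hsdiff : (Finset.univ \ w'.support.toFinset).card ≤ n := by
        have hss : Finset.univ \ w'.support.toFinset ⊂
            Finset.univ \ w.support.toFinset := by
          refine Finset.ssubset_iff_of_subset ?_ |>.mpr ⟨d, by simp [hd], by simpa using hd'⟩
          intro z hz
          simp only [Finset.mem_sdiff, List.mem_toFinset] at hz ⊢
          exact ⟨hz.1, fun h => hz.2 (hsub z h)⟩
        have := Finset.card_lt_card hss
        omega
      exact ih w' hsdiff (by omega)

/-- In a tree `T` on `m` vertices, for any integer `x ≥ 1` there is a set `B` of at most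
`x` vertices such that every vertex of `T` is within distance `⌈2(m-1)/x⌉` of `B`. -/
theorem stmt9 (T : SimpleGraph V) (hT : T.IsTree) (m x : ℕ)
    (hm : Fintype.card V = m) (hx : 1 ≤ x) :
    ∃ B : Finset V, B.card ≤ x ∧
      ∀ v : V, ∃ b ∈ B, T.dist v b ≤ (2 * (m - 1) + x - 1) / x := by
  classical
  subst hm
  set m := Fintype.card V with hm
  set d := (2 * (m - 1) + x - 1) / x with hd
  obtain ⟨v₀⟩ := hT.isConnected.nonempty
  obtain ⟨w, hwsup, hwlen⟩ :=
    grow hT.isConnected.preconnected v₀ (Finset.univ \ Walk.nil.support.toFinset).card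
      Walk.nil le_rfl (by simp)
  have hxd : 2 * (m - 1) ≤ x * d := by
    have h1 := Nat.div_add_mod (2 * (m - 1) + x - 1) x
    have h2 : (2 * (m - 1) + x - 1) % x < x := Nat.mod_lt _ hx
    rw [← hd] at h1
    omega
  refine ⟨(Finset.range x).image fun i => w.getVert (i * d), ?_, ?_⟩
  · exact (Finset.card_image_le).trans (by simp)
  · intro v
    obtain ⟨j, hjv, hjlen⟩ := Walk.mem_support_iff_exists_getVert.mp (hwsup v)
    set i := min (j / d) (x - 1) with hi
    have hix : i < x := lt_of_le_of_lt (min_le_right _ _) (by omega)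
    have hid : i * d ≤ j :=
      le_trans (Nat.mul_le_mul_right d (min_le_left _ _)) (Nat.div_mul_le_self j d)
    have hjd : j ≤ i * d + d := by
      rcases le_or_gt (j / d) (x - 1) with hcase | hcase
      · rw [hi, min_eq_left hcase]
        rcases Nat.eq_zero_or_pos d with hd0 | hd0
        · have hj2 : j ≤ 2 * (m - 1) := le_trans hjlen hwlen
          have := hxd
          simp only [hd0, Nat.mul_zero] at this ⊢
          omega
        · have h1 := Nat.div_add_mod j d
          have h2 : j % d < d := Nat.mod_lt _ hd0
          have h3 : j / d * d = d * (j / d) := Nat.mul_comm _ _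
          omega
      · rw [hi, min_eq_right (le_of_lt hcase)]
        have hjx : j ≤ x * d := le_trans hjlen (le_trans hwlen hxd)
        have : (x - 1) * d + d = x * d := by
          have : x - 1 + 1 = x := by omega
          calc (x - 1) * d + d = (x - 1 + 1) * d := by ring
            _ = x * d := by rw [this]
        omega
    refine ⟨w.getVert (i * d), Finset.mem_image.mpr ⟨i, Finset.mem_range.mpr hix, rfl⟩, ?_⟩
    obtain ⟨p, hp⟩ := exists_walk_getVert w (i * d) j hid hjlen
    rw [SimpleGraph.dist_comm, ← hjv]
    calc T.dist (w.getVert (i * d)) (w.getVert j) ≤ p.length := SimpleGraph.dist_le p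
      _ ≤ d := by omega

end Stmt9
end

section
/- Let G be a graph with maximum degree Δ ≥ 3, let H be a 2-connected induced subgraph of G, and suppose every vertex of V(G) \ V(H) is properly colored with colors from {1,...,Δ} and some vertex w ∈ V(H) has two neighbors (in G) colored with the same color. Then the partial coloring extends to a proper coloring of all of G with colors from {1,...,Δ}, by coloring the vertices of H in non-increasing order of their distance in H to w. -/
namespace Stmt16

variable {V : Type*} [Fintype V]

/-- The subgraph of `G` induced by `s` is 2-connected. -/
def TwoConnOn (G : SimpleGraph V) (s : Set V) : Prop :=
  3 ≤ s.ncard ∧ (G.induce s).Connected ∧ ∀ v ∈ s, (G.induce (s \ {v})).Connected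

noncomputable def greedy {Δ : ℕ} (G : SimpleGraph V) [DecidableRel G.Adj]
    (s : Set V) [DecidablePred (· ∈ s)] (c : V → Fin Δ) (key : V → ℕ) (v : V) : Fin Δ :=
  if v ∈ s then
    if h2 : ((Finset.univ : Finset (Fin Δ)) \
        (Finset.univ.filter (fun u => G.Adj v u ∧ (u ∉ s ∨ key u < key v))).attach.image
        (fun u => if h : u.1 ∈ s then greedy G s c key u.1 else c u.1)).Nonempty
    then h2.choose else c v
  else c v
termination_by key v
decreasing_by
  all_goals
  have h3 := u.2
  simp only [Finset.mem_filter] at h3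
  rcases h3.2.2 with h' | h'
  · exact absurd h h'
  · exact h'

theorem greedy_of_notMem {Δ : ℕ} (G : SimpleGraph V) [DecidableRel G.Adj]
    (s : Set V) [DecidablePred (· ∈ s)] (c : V → Fin Δ) (key : V → ℕ) {v : V} (hv : v ∉ s) :
    greedy G s c key v = c v := by
  rw [greedy]; simp [hv]

theorem greedy_notMem_image {Δ : ℕ} (G : SimpleGraph V) [DecidableRel G.Adj]
    (s : Set V) [DecidablePred (· ∈ s)] (c : V → Fin Δ) (key : V → ℕ) {v : V} (hv : v ∈ s)
    (hcard : ((Finset.univ.filter fun u => G.Adj v u ∧ (u ∉ s ∨ key u < key v)).image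
      (greedy G s c key)).card < Δ) :
    greedy G s c key v ∉ (Finset.univ.filter fun u => G.Adj v u ∧ (u ∉ s ∨ key u < key v)).image
      (greedy G s c key) := by
  have himg : ((Finset.univ.filter (fun u => G.Adj v u ∧ (u ∉ s ∨ key u < key v))).attach.image
      (fun u => if h : u.1 ∈ s then greedy G s c key u.1 else c u.1))
      = (Finset.univ.filter fun u => G.Adj v u ∧ (u ∉ s ∨ key u < key v)).image
        (greedy G s c key) := by
    have hfun : ∀ u : {x // x ∈ (Finset.univ.filter
        (fun u => G.Adj v u ∧ (u ∉ s ∨ key u < key v)))},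
        (if h : u.1 ∈ s then greedy G s c key u.1 else c u.1) = greedy G s c key u.1 := by
      intro u
      split
      · rfl
      · rename_i h; rw [greedy_of_notMem G s c key h]
    rw [Finset.image_congr (fun u _ => hfun u)]
    ext y
    simp only [Finset.mem_image, Finset.mem_attach, true_and, Subtype.exists]
    constructor
    · rintro ⟨u, hu, rfl⟩; exact ⟨u, hu, rfl⟩
    · rintro ⟨u, hu, rfl⟩; exact ⟨u, hu, rfl⟩
  have h2 : ((Finset.univ : Finset (Fin Δ)) \
      (Finset.univ.filter fun u => G.Adj v u ∧ (u ∉ s ∨ key u < key v)).image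
      (greedy G s c key)).Nonempty := by
    rw [Finset.sdiff_nonempty]
    intro hsub
    have := Finset.card_le_card hsub
    simp only [Finset.card_univ, Fintype.card_fin] at this
    omega
  have h2A : ((Finset.univ : Finset (Fin Δ)) \
      (Finset.univ.filter (fun u => G.Adj v u ∧ (u ∉ s ∨ key u < key v))).attach.image
      (fun u => if h : u.1 ∈ s then greedy G s c key u.1 else c u.1)).Nonempty := by
    rw [himg]; exact h2
  rw [greedy, if_pos hv, dif_pos h2A]
  have := h2A.choose_spec
  rw [Finset.mem_sdiff] at this
  rw [← himg]
  exact this.2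

theorem exists_key (G : SimpleGraph V) (s : Set V) (w : V) (hw : w ∈ s)
    (hconn : (G.induce s).Connected) :
    ∃ key : V → ℕ, Function.Injective key ∧
      ∀ v ∈ s, v ≠ w → ∃ u ∈ s, G.Adj v u ∧ key v < key u := by
  classical
  set d : V → ℕ := fun v => if h : v ∈ s then (G.induce s).dist ⟨w, hw⟩ ⟨v, h⟩ else 0 with hd_def
  set M := Fintype.card V + 1 with hM_def
  set idx : V → ℕ := fun v => (Fintype.equivFin V v : ℕ) with hidx_def
  set Dm := Finset.univ.sup d with hDm_def
  have hidxlt : ∀ v, idx v < M := fun v => by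
    have := (Fintype.equivFin V v).isLt
    simp only [hidx_def, hM_def]; omega
  refine ⟨fun v => (Dm - d v) * M + idx v, ?_, ?_⟩
  · intro u v h
    dsimp only at h
    have h1 : ((Dm - d u) * M + idx u) % M = idx u := by
      rw [Nat.mul_comm, Nat.mul_add_mod, Nat.mod_eq_of_lt (hidxlt u)]
    have h2 : ((Dm - d v) * M + idx v) % M = idx v := by
      rw [Nat.mul_comm, Nat.mul_add_mod, Nat.mod_eq_of_lt (hidxlt v)]
    have h3 : idx u = idx v := by rw [← h1, ← h2, h]
    exact (Fintype.equivFin V).injective (Fin.val_injective h3)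
  · intro v hv hne
    have hreach : (G.induce s).Reachable ⟨v, hv⟩ ⟨w, hw⟩ :=
      hconn.preconnected ⟨v, hv⟩ ⟨w, hw⟩
    have hnes : (⟨v, hv⟩ : s) ≠ ⟨w, hw⟩ := fun h => hne (congrArg Subtype.val h)
    have hpos : 0 < (G.induce s).dist ⟨v, hv⟩ ⟨w, hw⟩ := hreach.pos_dist_of_ne hnes
    obtain ⟨p, hp⟩ := hreach.exists_walk_length_eq_dist
    cases p with
    | nil => simp only [SimpleGraph.Walk.length_nil] at hp; omega
    | @cons _ x _ hadj q =>
      have hGadj : G.Adj v x.1 := hadj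
      have hdle : (G.induce s).dist ⟨x.1, x.2⟩ ⟨w, hw⟩ ≤ q.length := SimpleGraph.dist_le q
      have hlen : q.length + 1 = (G.induce s).dist ⟨v, hv⟩ ⟨w, hw⟩ := by
        simpa [SimpleGraph.Walk.length_cons] using hp
      have hdvx : d x.1 < d v := by
        simp only [hd_def, dif_pos hv, dif_pos x.2]
        rw [SimpleGraph.dist_comm (u := (⟨w, hw⟩ : s)),
          SimpleGraph.dist_comm (u := (⟨w, hw⟩ : s))]
        omega
      have hvDm : d v ≤ Dm := Finset.le_sup (Finset.mem_univ v)
      have h3 : (Dm - d v + 1) * M ≤ (Dm - d x.1) * M :=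
        Nat.mul_le_mul_right M (by omega)
      refine ⟨x.1, x.2, hGadj, ?_⟩
      calc (Dm - d v) * M + idx v
          < (Dm - d v) * M + M := Nat.add_lt_add_left (hidxlt v) _
        _ = (Dm - d v + 1) * M := (Nat.succ_mul _ _).symm
        _ ≤ (Dm - d x.1) * M := h3
        _ ≤ (Dm - d x.1) * M + idx x.1 := Nat.le_add_right _ _

/-- Let `G` have maximum degree `Δ ≥ 3`, let `s` induce a 2-connected subgraph of `G`,
and let `c` properly color all vertices outside `s` with colors from `{1,…,Δ}` (`Fin Δ`).
If some vertex `w ∈ s` has two distinct neighbors outside `s` with the same color, then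
the partial coloring extends to a proper `Δ`-coloring of all of `G`. -/
theorem stmt16 (G : SimpleGraph V) (Δ : ℕ) (hΔ : 3 ≤ Δ)
    (hdeg : ∀ v : V, {w | G.Adj v w}.ncard ≤ Δ)
    (s : Set V) (h2conn : TwoConnOn G s)
    (c : V → Fin Δ)
    (hproper : ∀ u ∉ s, ∀ w ∉ s, G.Adj u w → c u ≠ c w)
    (w : V) (hw : w ∈ s)
    (a b : V) (ha : a ∉ s) (hb : b ∉ s) (hab : a ≠ b)
    (hwa : G.Adj w a) (hwb : G.Adj w b) (hcab : c a = c b) :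
    ∃ c' : V → Fin Δ, (∀ u, u ∉ s → c' u = c u) ∧
      ∀ u x : V, G.Adj u x → c' u ≠ c' x := by
  classical
  obtain ⟨-, hconn, -⟩ := h2conn
  obtain ⟨key, hkeyinj, hkey⟩ := exists_key G s w hw hconn
  refine ⟨greedy G s c key, fun u hu => greedy_of_notMem G s c key hu, ?_⟩
  have hnbr : ∀ v : V, (Finset.univ.filter fun u => G.Adj v u).card ≤ Δ := by
    intro v
    have h := hdeg v
    rwa [show {u | G.Adj v u} = ((Finset.univ.filter fun u => G.Adj v u : Finset V) : Set V) by
      ext; simp, Set.ncard_coe_finset] at h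
  have hbound : ∀ v ∈ s, ((Finset.univ.filter fun u =>
      G.Adj v u ∧ (u ∉ s ∨ key u < key v)).image (greedy G s c key)).card < Δ := by
    intro v hv
    by_cases hvw : v = w
    · subst hvw
      set P := Finset.univ.filter fun u => G.Adj v u ∧ (u ∉ s ∨ key u < key v) with hP
      have hbP : b ∈ P := by simp [hP, hwb, hb]
      have haP : a ∈ P := by simp [hP, hwa, ha]
      have himg : P.image (greedy G s c key) = (P.erase b).image (greedy G s c key) := by
        apply Finset.Subset.antisymm
        · intro y hy
          rw [Finset.mem_image] at hy ⊢
          obtain ⟨u, hu, rfl⟩ := hy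
          by_cases hub : u = b
          · subst hub
            exact ⟨a, Finset.mem_erase.mpr ⟨hab, haP⟩, by
              rw [greedy_of_notMem G s c key ha, greedy_of_notMem G s c key hb, hcab]⟩
          · exact ⟨u, Finset.mem_erase.mpr ⟨hub, hu⟩, rfl⟩
        · exact Finset.image_subset_image (Finset.erase_subset _ _)
      have h1 : ((P.erase b).image (greedy G s c key)).card ≤ (P.erase b).card :=
        Finset.card_image_le
      have h2 : (P.erase b).card ≤ ((Finset.univ.filter fun u => G.Adj v u).erase b).card := by
        apply Finset.card_le_card
        apply Finset.erase_subset_erase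
        intro x hx
        simp only [hP, Finset.mem_filter] at hx ⊢
        exact ⟨hx.1, hx.2.1⟩
      have h3 : ((Finset.univ.filter fun u => G.Adj v u).erase b).card
          = (Finset.univ.filter fun u => G.Adj v u).card - 1 :=
        Finset.card_erase_of_mem (by simp [hwb])
      have h4 := hnbr v
      rw [himg]
      omega
    · obtain ⟨u0, hu0s, hu0adj, hu0key⟩ := hkey v hv hvw
      have hsub : (Finset.univ.filter fun u => G.Adj v u ∧ (u ∉ s ∨ key u < key v))
          ⊆ (Finset.univ.filter fun u => G.Adj v u).erase u0 := by
        intro x hx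
        simp only [Finset.mem_filter, Finset.mem_erase, Finset.mem_univ, true_and] at hx ⊢
        refine ⟨?_, hx.1⟩
        rintro rfl
        rcases hx.2 with h' | h'
        · exact h' hu0s
        · omega
      have h1 : ((Finset.univ.filter fun u =>
          G.Adj v u ∧ (u ∉ s ∨ key u < key v)).image (greedy G s c key)).card
          ≤ ((Finset.univ.filter fun u => G.Adj v u).erase u0).card :=
        le_trans Finset.card_image_le (Finset.card_le_card hsub)
      have h3 : ((Finset.univ.filter fun u => G.Adj v u).erase u0).card
          = (Finset.univ.filter fun u => G.Adj v u).card - 1 :=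
        Finset.card_erase_of_mem (by simp [hu0adj])
      have h4 := hnbr v
      omega
  intro u x hadj hceq
  by_cases hus : u ∈ s <;> by_cases hxs : x ∈ s
  · rcases Nat.lt_or_ge (key x) (key u) with hlt | hge
    · exact greedy_notMem_image G s c key hus (hbound u hus)
        (Finset.mem_image.mpr ⟨x, by simp [hadj, hlt], hceq.symm⟩)
    · have hne : key u ≠ key x := fun h => G.ne_of_adj hadj (hkeyinj h)
      have hlt : key u < key x := by omega
      exact greedy_notMem_image G s c key hxs (hbound x hxs)
        (Finset.mem_image.mpr ⟨u, by simp [hadj.symm, hlt], hceq⟩)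
  · exact greedy_notMem_image G s c key hus (hbound u hus)
      (Finset.mem_image.mpr ⟨x, by simp [hadj, hxs], hceq.symm⟩)
  · exact greedy_notMem_image G s c key hxs (hbound x hxs)
      (Finset.mem_image.mpr ⟨u, by simp [hadj.symm, hus], hceq⟩)
  · rw [greedy_of_notMem G s c key hus, greedy_of_notMem G s c key hxs] at hceq
    exact hproper u hus x hxs hadj hceq

end Stmt16
end
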